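/- arXiv:1708.03316 — 9 statements merged into one kernel-verified Lean document; each statement's English description precedes it below -/
import Mathlib

section
/- For each n ≥ 0 and each integer d with |d| ≤ n, the Catalan number c_n satisfies c_n = Σ_{a,b ≥ 0, a+b ≤ n, a−b = d} c_{n−b}^a · c_{n−a}^b, where c_n^k = C(n+k, k) − C(n+k, k−1) are the truncated Catalan (ballot) numbers. In particular the right-hand side is independent of d. -/
/-- Truncated Catalan (ballot) numbers: `cc n k = C(n+k,k) - C(n+k,k-1)` for `0 ≤ k ≤ n`,
and `0` otherwise. -/
def cc (n : ℕ) (k : ℤ) : ℤ :=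
  if 0 ≤ k ∧ k ≤ (n : ℤ) then
    ((n + k.toNat).choose k.toNat : ℤ) -
      (if k = 0 then 0 else ((n + k.toNat).choose (k.toNat - 1) : ℤ))
  else 0

/-!
Write `T(a, b) = c_{n-b}^a c_{n-a}^b` and `S(d) = ∑_{a - b = d} T(a, b)`. Applying the ballot
recurrence `c_m^k = c_{m-1}^k + c_m^{k-1}` to each factor gives
`T(a, b) - T(a-1, b) = U(a, b) - U(a-1, b-1)` with `U(a, b) = c_{n-b-1}^a c_{n-a}^b`, so
`S(d+1) - S(d)` telescopes to `0` for `0 ≤ d < n`. At `d = n` the only nonzero term is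
`T(n, 0) = c_n^n = c_n`, and `S(-d) = S(d)` because `T(a, b) = T(b, a)`.
-/

open Finset

lemma cc_of_neg {n : ℕ} {k : ℤ} (hk : k < 0) : cc n k = 0 := by
  rw [cc, if_neg (by omega)]

lemma cc_of_lt {n : ℕ} {k : ℤ} (hk : (n : ℤ) < k) : cc n k = 0 := by
  rw [cc, if_neg (by omega)]

lemma cc_zero_right (n : ℕ) : cc n 0 = 1 := by
  simp [cc]

lemma cc_succ_eq_choose_sub {n k : ℕ} (hk : k ≤ n) :
    cc n (k + 1 : ℕ) = ((n + k + 1).choose (k + 1) : ℤ) - (n + k + 1).choose k := by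
  rcases hk.lt_or_eq with hk | rfl
  · rw [cc, if_pos (by omega), if_neg (by omega)]
    simp [add_assoc]
  · -- At `k = n` both sides vanish, the right one since `C(2n+1, n+1) = C(2n+1, n)`.
    rw [cc_of_lt (by omega), ← two_mul, Nat.choose_symm_half, sub_self]

lemma cc_succ_succ {m k : ℕ} (hk : k ≤ m) :
    cc (m + 1) (k + 1 : ℕ) = cc m (k + 1 : ℕ) + cc (m + 1) k := by
  rw [cc_succ_eq_choose_sub (by omega : k ≤ m + 1), cc_succ_eq_choose_sub hk]
  cases k with
  | zero => simp [cc_zero_right]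
  | succ j =>
    rw [cc_succ_eq_choose_sub (by omega : j ≤ m + 1)]
    have pascal₁ := Nat.choose_succ_succ' (m + j + 2) (j + 1)
    have pascal₂ := Nat.choose_succ_succ' (m + j + 2) j
    rw [show m + 1 + (j + 1) + 1 = m + j + 2 + 1 by ring,
      show m + (j + 1) + 1 = m + j + 2 by ring, show m + 1 + j + 1 = m + j + 2 by ring]
    push_cast [pascal₁, pascal₂]
    ring

lemma cc_self (n : ℕ) : cc n n = catalan n := by
  cases n with
  | zero => simp [cc_zero_right]
  | succ j =>
    rw [cc_succ_eq_choose_sub (Nat.le_succ j), show j + 1 + j + 1 = 2 * (j + 1) by ring]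
    have hcatalan : ((j + 2 : ℕ) : ℤ) * catalan (j + 1) = (2 * (j + 1)).choose (j + 1) := by
      exact_mod_cast succ_mul_catalan_eq_centralBinom (j + 1)
    have hchoose :
        ((2 * (j + 1)).choose (j + 1) : ℤ) * (j + 1) = (2 * (j + 1)).choose j * (j + 2) := by
      have := Nat.choose_succ_right_eq (2 * (j + 1)) j
      rw [show 2 * (j + 1) - j = j + 2 by omega] at this
      exact_mod_cast this
    refine mul_left_cancel₀ (show ((j + 2 : ℕ) : ℤ) ≠ 0 by positivity) ?_
    push_cast at hcatalan ⊢
    linear_combination hchoose - hcatalan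

-- Extending `cc` by zero to negative `m` avoids the truncated subtraction of `cc (n - b - 1)`.
def ballot (m k : ℤ) : ℤ := if 0 ≤ m then cc m.toNat k else 0

@[simp]
lemma ballot_natCast (n : ℕ) (k : ℤ) : ballot n k = cc n k := by
  simp [ballot]

lemma ballot_of_neg_right {m k : ℤ} (hk : k < 0) : ballot m k = 0 := by
  unfold ballot
  split_ifs
  exacts [cc_of_neg hk, rfl]

lemma ballot_of_lt {m k : ℤ} (h : m < k) : ballot m k = 0 := by
  unfold ballot
  split_ifs
  exacts [cc_of_lt (by omega), rfl]

lemma ballot_zero_right {m : ℤ} (hm : 0 ≤ m) : ballot m 0 = 1 := by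
  rw [ballot, if_pos hm, cc_zero_right]

lemma ballot_eq_add {m k : ℤ} (hk : 1 ≤ k) (hkm : k ≤ m) :
    ballot m k = ballot (m - 1) k + ballot m (k - 1) := by
  obtain ⟨m, rfl⟩ : ∃ m' : ℕ, m = (m' + 1 : ℕ) := ⟨(m - 1).toNat, by omega⟩
  obtain ⟨k, rfl⟩ : ∃ k' : ℕ, k = (k' + 1 : ℕ) := ⟨(k - 1).toNat, by omega⟩
  rw [show ((m + 1 : ℕ) : ℤ) - 1 = m by push_cast; ring,
    show ((k + 1 : ℕ) : ℤ) - 1 = k by push_cast; ring, ballot_natCast, ballot_natCast,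
    ballot_natCast]
  exact cc_succ_succ (by omega)

lemma ballot_self {m : ℤ} (hm : 1 ≤ m) : ballot m m = ballot m (m - 1) := by
  rw [ballot_eq_add hm le_rfl, ballot_of_lt (by omega), zero_add]

section Diagonal

variable (n : ℕ)

def diagTerm (a b : ℤ) : ℤ := ballot (n - b) a * ballot (n - a) b

def shiftTerm (a b : ℤ) : ℤ := ballot (n - b - 1) a * ballot (n - a) b

lemma diagTerm_sub_diagTerm {a b : ℤ} (ha : 1 ≤ a) (hb : 0 ≤ b)
    (hab : (a, b) ≠ ((n : ℤ) + 1, 0)) :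
    diagTerm n a b - diagTerm n (a - 1) b = shiftTerm n a b - shiftTerm n (a - 1) (b - 1) := by
  unfold diagTerm shiftTerm
  rw [show (n : ℤ) - (b - 1) - 1 = n - b by ring]
  rcases lt_trichotomy (a + b) (n + 1) with hlt | heq | hgt
  · rw [ballot_eq_add ha (by omega : a ≤ n - b)]
    rcases hb.eq_or_lt with rfl | hb
    · rw [ballot_zero_right (by omega), ballot_zero_right (by omega),
        ballot_of_neg_right (show (0 : ℤ) - 1 < 0 by norm_num)]
      ring
    · rw [ballot_eq_add (m := n - (a - 1)) hb (by omega),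
        show (n : ℤ) - (a - 1) - 1 = n - a by ring]
      ring
  · have hb : 1 ≤ b := by
      by_contra hb
      exact hab (by rw [show b = 0 by omega, show a = n + 1 by omega])
    rw [ballot_of_lt (by omega : (n : ℤ) - b < a),
      ballot_of_lt (by omega : (n : ℤ) - b - 1 < a), show (n : ℤ) - (a - 1) = b by omega,
      ballot_self hb]
  · rw [ballot_of_lt (by omega : (n : ℤ) - b < a),
      ballot_of_lt (by omega : (n : ℤ) - b < a - 1),
      ballot_of_lt (by omega : (n : ℤ) - b - 1 < a)]
    ring

def diagSum (d : ℕ) : ℤ := ∑ b ∈ range (n + 1), diagTerm n (b + d) b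

lemma diagSum_succ {d : ℕ} (hd : d < n) : diagSum n (d + 1) = diagSum n d := by
  set f : ℕ → ℤ := fun i ↦ shiftTerm n (i + d) (i - 1)
  have htelescope : ∀ b ∈ range (n + 1),
      diagTerm n (b + (d + 1 : ℕ)) b - diagTerm n (b + d) b = f (b + 1) - f b := by
    intro b _
    have := diagTerm_sub_diagTerm n (a := b + d + 1) (b := b) (by omega) (by omega)
      (fun h ↦ by simp only [Prod.mk.injEq] at h; omega)
    simp only [f]
    push_cast
    convert this using 3 <;> ring
  have hlast : f (n + 1) = 0 := by
    simp only [f, shiftTerm]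
    rw [ballot_of_lt
      (show (n : ℤ) - ((n + 1 : ℕ) - 1) - 1 < (n + 1 : ℕ) + d by push_cast; omega), zero_mul]
  have hfirst : f 0 = 0 := by
    simp only [f, shiftTerm]
    rw [ballot_of_neg_right (show ((0 : ℕ) : ℤ) - 1 < 0 by norm_num), mul_zero]
  rw [← sub_eq_zero, diagSum, diagSum, ← sum_sub_distrib, sum_congr rfl htelescope,
    sum_range_sub, hlast, hfirst, sub_zero]

lemma diagSum_self : diagSum n n = catalan n := by
  rw [diagSum, sum_eq_single 0]
  · simp [diagTerm, ballot_zero_right, cc_self]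
  · intro b _ hb
    rw [diagTerm, ballot_of_lt (by omega), zero_mul]
  · simp

lemma diagSum_eq_catalan {d : ℕ} (hd : d ≤ n) : diagSum n d = catalan n := by
  refine Nat.decreasingInduction (motive := fun d _ ↦ diagSum n d = catalan n)
    (fun d hd ih ↦ ?_) (diagSum_self n) hd
  rw [← diagSum_succ n hd, ih]

end Diagonal

def pairSum (n : ℕ) (d : ℤ) : ℤ :=
  ∑ p ∈ (Finset.range (n + 1) ×ˢ Finset.range (n + 1)).filter
      (fun p => p.1 + p.2 ≤ n ∧ (p.1 : ℤ) - (p.2 : ℤ) = d),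
    cc (n - p.2) (p.1 : ℤ) * cc (n - p.1) (p.2 : ℤ)

lemma pairSum_neg (n : ℕ) (d : ℤ) : pairSum n (-d) = pairSum n d := by
  refine sum_nbij' Prod.swap Prod.swap ?_ ?_ (fun _ _ ↦ rfl) (fun _ _ ↦ rfl)
    (fun _ _ ↦ mul_comm _ _)
  all_goals
    simp only [mem_filter, mem_product, mem_range, Prod.fst_swap, Prod.snd_swap]
    omega

lemma pairSum_natCast (n d : ℕ) : pairSum n d = diagSum n d := by
  have hvanish : ∀ b ∈ range (n + 1), ¬ 2 * b + d ≤ n → diagTerm n (b + d) b = 0 := by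
    intro b _ hb
    rw [diagTerm, ballot_of_lt (by omega), zero_mul]
  rw [pairSum, diagSum,
    ← sum_filter_of_ne (fun b hb h ↦ by_contra fun h' ↦ h (hvanish b hb h'))]
  refine sum_nbij' Prod.snd (fun b ↦ (b + d, b)) ?_ ?_ ?_ (fun _ _ ↦ rfl) ?_
  all_goals simp only [mem_filter, mem_product, mem_range]
  · omega
  · omega
  · rintro ⟨a, b⟩ h
    dsimp only at h ⊢
    simp only [Prod.mk.injEq, and_true]
    omega
  · rintro ⟨a, b⟩ ⟨⟨ha, hb⟩, hab, had⟩
    obtain rfl : a = b + d := by omega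
    rw [diagTerm, ← Nat.cast_add, ← Nat.cast_sub (show b + d ≤ n by omega),
      ← Nat.cast_sub (show b ≤ n by omega), ballot_natCast, ballot_natCast]

theorem catalan_eq_sum_truncated (n : ℕ) (d : ℤ) (hd : |d| ≤ (n : ℤ)) :
    (catalan n : ℤ) =
      ∑ p ∈ (Finset.range (n + 1) ×ˢ Finset.range (n + 1)).filter
          (fun p => p.1 + p.2 ≤ n ∧ (p.1 : ℤ) - (p.2 : ℤ) = d),
        cc (n - p.2) (p.1 : ℤ) * cc (n - p.1) (p.2 : ℤ) := by
  change _ = pairSum n d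
  rw [abs_le] at hd
  obtain ⟨e, rfl | rfl⟩ := Int.eq_nat_or_neg d
  · rw [pairSum_natCast, diagSum_eq_catalan n (by omega)]
  · rw [pairSum_neg, pairSum_natCast, diagSum_eq_catalan n (by omega)]
end

section
/- For n ≥ 0 and m ∈ {0,1}, the (n+1)×(n+1) Hankel matrix with (i,j)-entry c_{m+i+j} factorizes as L·U, where L is the lower unitriangular matrix with (i,k)-entry (for k ≤ i) equal to the truncated Catalan number c_{i+k+m}^{i−k} and U is the upper unitriangular matrix with (k,j)-entry (for k ≤ j) equal to c_{k+j+m}^{j−k}; that is, c_{m+i+j} = Σ_{k=0}^{min(i,j)} c_{i+k+m}^{i−k} · c_{k+j+m}^{j−k} for all i,j ≥ 0 and m ∈ {0,1}. -/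
/-- Integer-indexed binomial coefficient. -/
def Bi (a : ℕ) (r : ℤ) : ℤ := if 0 ≤ r then (a.choose r.toNat : ℤ) else 0

lemma Bi_neg {a : ℕ} {r : ℤ} (h : r < 0) : Bi a r = 0 := by
  simp [Bi, not_le.mpr h]

lemma Bi_of_nonneg {a : ℕ} {r : ℤ} (h : 0 ≤ r) : Bi a r = (a.choose r.toNat : ℤ) := by
  simp [Bi, h]

lemma Bi_zero_of_gt {a : ℕ} {r : ℤ} (h : (a : ℤ) < r) : Bi a r = 0 := by
  rw [Bi_of_nonneg (by omega)]
  rw [Nat.choose_eq_zero_of_lt (by omega)]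
  simp

lemma Bi_symm (a : ℕ) (r : ℤ) : Bi a r = Bi a ((a : ℤ) - r) := by
  rcases lt_or_ge r 0 with h | h
  · rw [Bi_neg h, Bi_zero_of_gt (by omega)]
  rcases le_or_gt r (a : ℤ) with h2 | h2
  · rw [Bi_of_nonneg h, Bi_of_nonneg (by omega)]
    have : ((a : ℤ) - r).toNat = a - r.toNat := by omega
    rw [this, Nat.choose_symm (by omega)]
  · rw [Bi_zero_of_gt h2, Bi_neg (by omega)]

/-- Vandermonde identity for `Bi`, over any interval covering the support. -/
lemma Bi_vandermonde (a b : ℕ) (p q lo hi : ℤ) (hlo : lo ≤ -q) (hhi : p ≤ hi)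
    (hpq : 0 ≤ p + q) :
    ∑ k ∈ Finset.Icc lo hi, Bi a (p - k) * Bi b (q + k) =
      ((a + b).choose (p + q).toNat : ℤ) := by
  have hsub : Finset.Icc (-q) p ⊆ Finset.Icc lo hi := by
    apply Finset.Icc_subset_Icc hlo hhi
  rw [← Finset.sum_subset hsub (by
    intro k hk hnk
    simp only [Finset.mem_Icc, not_and, not_le] at hk hnk
    rcases (by omega : k < -q ∨ p < k) with h | h
    · rw [Bi_neg (show q + k < 0 by omega), mul_zero]
    · rw [Bi_neg (show p - k < 0 by omega), zero_mul])]
  rw [Nat.add_choose_eq]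
  push_cast
  refine Finset.sum_nbij' (fun k => ((p - k).toNat, (q + k).toNat)) (fun x => p - (x.1 : ℤ))
    ?_ ?_ ?_ ?_ ?_
  · intro k hk
    simp only [Finset.mem_Icc] at hk
    simp only [Finset.HasAntidiagonal.mem_antidiagonal]
    omega
  · intro x hx
    simp only [Finset.HasAntidiagonal.mem_antidiagonal] at hx
    simp only [Finset.mem_Icc]
    omega
  · intro k hk
    simp only [Finset.mem_Icc] at hk
    show p - ((p - k).toNat : ℤ) = k
    omega
  · intro x hx
    simp only [Finset.HasAntidiagonal.mem_antidiagonal] at hx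
    show ((p - (p - (x.1 : ℤ))).toNat, (q + (p - (x.1 : ℤ))).toNat) = x
    have h1 : (p - (p - (x.1 : ℤ))).toNat = x.1 := by omega
    have h2 : (q + (p - (x.1 : ℤ))).toNat = x.2 := by omega
    rw [h1, h2]
  · intro k hk
    simp only [Finset.mem_Icc] at hk
    show Bi a (p - k) * Bi b (q + k) =
      (a.choose ((p - k).toNat, (q + k).toNat).1 : ℤ) * (b.choose ((p - k).toNat, (q + k).toNat).2 : ℤ)
    rw [Bi_of_nonneg (by omega), Bi_of_nonneg (by omega)]

/-- The factor matches the truncated Catalan number. -/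
lemma cc_eq_Bi (n m k : ℕ) :
    cc (n + k + m) ((n : ℤ) - k) =
      Bi (2 * n + m) ((n : ℤ) - k) - Bi (2 * n + m) ((n : ℤ) - k - 1) := by
  rcases le_or_gt k n with hk | hk
  · have hcond : (0 : ℤ) ≤ (n : ℤ) - k ∧ (n : ℤ) - k ≤ ((n + k + m : ℕ) : ℤ) := by
      constructor <;> push_cast <;> omega
    rw [cc, if_pos hcond, Bi_of_nonneg (by omega)]
    have ht : ((n : ℤ) - k).toNat = n - k := by omega
    have harg : n + k + m + ((n : ℤ) - k).toNat = 2 * n + m := by omega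
    rw [ht] at harg ⊢
    rw [harg]
    rcases eq_or_lt_of_le hk with hkn | hkn
    · rw [if_pos (show (n : ℤ) - (k : ℤ) = 0 by omega),
        Bi_neg (show (n : ℤ) - (k : ℤ) - 1 < 0 by omega)]
    · rw [if_neg (by omega), Bi_of_nonneg (by omega)]
      have : ((n : ℤ) - k - 1).toNat = n - k - 1 := by omega
      rw [this]
  · rw [cc, if_neg (by push_cast; omega),
      Bi_neg (show (n : ℤ) - (k : ℤ) < 0 by omega),
      Bi_neg (show (n : ℤ) - (k : ℤ) - 1 < 0 by omega)]
    ring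

lemma cc_zero_of_gt (n m k : ℕ) (h : n < k) : cc (n + k + m) ((n : ℤ) - k) = 0 := by
  rw [cc, if_neg (by push_cast; omega)]

/-- Reflection identity for the factor. -/
lemma factor_reflect (n m : ℕ) (k : ℤ) :
    Bi (2 * n + m) ((n : ℤ) - (-k - m - 1)) - Bi (2 * n + m) ((n : ℤ) - (-k - m - 1) - 1) =
      -(Bi (2 * n + m) ((n : ℤ) - k) - Bi (2 * n + m) ((n : ℤ) - k - 1)) := by
  have h1 : (n : ℤ) - (-k - m - 1) = ((2 * n + m : ℕ) : ℤ) - ((n : ℤ) - k - 1) := by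
    push_cast; ring
  have h2 : (n : ℤ) - (-k - m - 1) - 1 = ((2 * n + m : ℕ) : ℤ) - ((n : ℤ) - k) := by
    push_cast; ring
  rw [h2, h1, ← Bi_symm, ← Bi_symm]
  ring

lemma catalan_eq_choose_sub (N : ℕ) :
    (catalan N : ℤ) = ((2 * N).choose N : ℤ) - ((2 * N).choose (N + 1) : ℤ) := by
  have hc : ((N : ℤ) + 1) * (catalan N : ℤ) = ((2 * N).choose N : ℤ) := by
    have := succ_mul_catalan_eq_centralBinom N
    rw [Nat.centralBinom_eq_two_mul_choose] at this
    exact_mod_cast this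
  have hs := Nat.add_one_mul_choose_eq (2 * N) N
  rw [Nat.choose_succ_succ (2 * N) N] at hs
  have hs' : (2 * (N : ℤ) + 1) * ((2 * N).choose N : ℤ) =
      (((2 * N).choose N : ℤ) + ((2 * N).choose (N + 1) : ℤ)) * ((N : ℤ) + 1) := by
    exact_mod_cast hs
  have key' : ((N : ℤ) + 1) * ((2 * N).choose (N + 1) : ℤ) =
      (N : ℤ) * ((2 * N).choose N : ℤ) := by linear_combination (-1 : ℤ) * hs'
  apply mul_left_cancel₀ (show ((N : ℤ) + 1) ≠ 0 by positivity)
  rw [hc]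
  linarith [key']

/-- The summand of the full symmetric sum. -/
def gg (i j m : ℕ) (k : ℤ) : ℤ :=
  (Bi (2*i+m) ((i:ℤ) - k) - Bi (2*i+m) ((i:ℤ) - k - 1)) *
  (Bi (2*j+m) ((j:ℤ) - k) - Bi (2*j+m) ((j:ℤ) - k - 1))

lemma gg_cc (i j m k : ℕ) :
    gg i j m (k : ℤ) = cc (i + k + m) ((i:ℤ) - k) * cc (k + j + m) ((j:ℤ) - k) := by
  rw [gg, ← cc_eq_Bi i m k, show k + j + m = j + k + m by ring, ← cc_eq_Bi j m k]

lemma gg_reflect (i j m : ℕ) (k : ℤ) : gg i j m (-k - (m:ℤ) - 1) = gg i j m k := by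
  rw [gg, gg, factor_reflect i m k, factor_reflect j m k]
  ring

lemma gg_neg_one (i j : ℕ) : gg i j 1 (-1) = 0 := by
  rw [gg]
  have e : Bi (2*i+1) ((i:ℤ) - (-1)) = Bi (2*i+1) ((i:ℤ) - (-1) - 1) := by
    rw [Bi_symm (2*i+1) ((i:ℤ) - (-1))]
    congr 1
    push_cast
    ring
  rw [e, sub_self, zero_mul]

theorem hankel_catalan_LU (m : ℕ) (hm : m = 0 ∨ m = 1) (i j : ℕ) :
    (catalan (m + i + j) : ℤ) =
      ∑ k ∈ Finset.range (min i j + 1),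
        cc (i + k + m) ((i : ℤ) - (k : ℤ)) * cc (k + j + m) ((j : ℤ) - (k : ℤ)) := by
  by_cases h0 : m = 0 ∧ i = 0 ∧ j = 0
  · obtain ⟨rfl, rfl, rfl⟩ := h0
    simp [cc, Finset.sum_range_one, catalan_zero]
  have hN : 1 ≤ i + j + m := by
    by_contra h
    push_neg at h
    exact h0 ⟨by omega, by omega, by omega⟩
  set N := i + j + m with hNdef
  have hiM : i ≤ max i j := le_max_left _ _
  have hjM : j ≤ max i j := le_max_right _ _
  set M := max i j with hMdef
  set lo : ℤ := -((M : ℤ) + m + 1) with hlodef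
  set hi : ℤ := (M : ℤ) with hhidef
  -- Step A : full symmetric sum equals 2 * catalan N
  have stepA : ∑ k ∈ Finset.Icc lo hi, gg i j m k = 2 * (catalan N : ℤ) := by
    have hg : ∀ k ∈ Finset.Icc lo hi, gg i j m k =
        Bi (2*i+m) ((i:ℤ) - k) * Bi (2*j+m) ((j:ℤ) + (m:ℤ) + k)
        - Bi (2*i+m) ((i:ℤ) - k) * Bi (2*j+m) ((j:ℤ) + (m:ℤ) + 1 + k)
        - Bi (2*i+m) (((i:ℤ) - 1) - k) * Bi (2*j+m) ((j:ℤ) + (m:ℤ) + k)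
        + Bi (2*i+m) (((i:ℤ) - 1) - k) * Bi (2*j+m) ((j:ℤ) + (m:ℤ) + 1 + k) := by
      intro k _
      rw [gg, Bi_symm (2*j+m) ((j:ℤ) - k), Bi_symm (2*j+m) ((j:ℤ) - k - 1)]
      have e1 : ((2*j+m : ℕ) : ℤ) - ((j:ℤ) - k) = (j:ℤ) + (m:ℤ) + k := by push_cast; ring
      have e2 : ((2*j+m : ℕ) : ℤ) - ((j:ℤ) - k - 1) = (j:ℤ) + (m:ℤ) + 1 + k := by
        push_cast; ring
      have e3 : (i:ℤ) - k - 1 = ((i:ℤ) - 1) - k := by ring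
      rw [e1, e2, e3]
      ring
    rw [Finset.sum_congr rfl hg]
    simp only [Finset.sum_add_distrib, Finset.sum_sub_distrib]
    rw [Bi_vandermonde (2*i+m) (2*j+m) ((i:ℤ)) ((j:ℤ) + (m:ℤ)) lo hi
          (by omega) (by omega) (by omega),
        Bi_vandermonde (2*i+m) (2*j+m) ((i:ℤ)) ((j:ℤ) + (m:ℤ) + 1) lo hi
          (by omega) (by omega) (by omega),
        Bi_vandermonde (2*i+m) (2*j+m) ((i:ℤ) - 1) ((j:ℤ) + (m:ℤ)) lo hi
          (by omega) (by omega) (by omega),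
        Bi_vandermonde (2*i+m) (2*j+m) ((i:ℤ) - 1) ((j:ℤ) + (m:ℤ) + 1) lo hi
          (by omega) (by omega) (by omega)]
    have hab : 2*i+m + (2*j+m) = 2*N := by omega
    have t1 : ((i:ℤ) + ((j:ℤ) + (m:ℤ))).toNat = N := by omega
    have t2 : ((i:ℤ) + ((j:ℤ) + (m:ℤ) + 1)).toNat = N + 1 := by omega
    have t3 : ((i:ℤ) - 1 + ((j:ℤ) + (m:ℤ))).toNat = N - 1 := by omega
    have t4 : ((i:ℤ) - 1 + ((j:ℤ) + (m:ℤ) + 1)).toNat = N := by omega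
    rw [hab, t1, t2, t3, t4]
    have hsymm : (2*N).choose (N-1) = (2*N).choose (N+1) := by
      have h := Nat.choose_symm (show N+1 ≤ 2*N by omega)
      rwa [show 2*N - (N+1) = N-1 by omega] at h
    rw [hsymm, catalan_eq_choose_sub N]
    ring
  -- Step B : full symmetric sum equals twice the truncated sum
  have stepB : ∑ k ∈ Finset.Icc lo hi, gg i j m k =
      2 * ∑ k ∈ Finset.range (min i j + 1),
        cc (i + k + m) ((i:ℤ) - (k:ℤ)) * cc (k + j + m) ((j:ℤ) - (k:ℤ)) := by
    have hsplit : ∑ k ∈ Finset.Icc lo hi, gg i j m k =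
        (∑ k ∈ Finset.Icc lo (-1), gg i j m k) + ∑ k ∈ Finset.Icc (0:ℤ) hi, gg i j m k := by
      have hun : Finset.Icc lo (-1) ∪ Finset.Icc (0:ℤ) hi = Finset.Icc lo hi := by
        ext x
        simp only [Finset.mem_union, Finset.mem_Icc]
        omega
      have hdis : Disjoint (Finset.Icc lo (-1)) (Finset.Icc (0:ℤ) hi) := by
        rw [Finset.disjoint_left]
        intro x hx hx2
        simp only [Finset.mem_Icc] at hx hx2
        omega
      rw [← hun, Finset.sum_union hdis]
    have hrefl : ∑ k ∈ Finset.Icc lo (-1), gg i j m k =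
        ∑ k ∈ Finset.Icc (-(m:ℤ)) hi, gg i j m k := by
      refine Finset.sum_nbij' (fun k => -k - (m:ℤ) - 1) (fun k => -k - (m:ℤ) - 1)
        ?_ ?_ ?_ ?_ ?_
      · intro a ha
        simp only [Finset.mem_Icc] at ha ⊢
        omega
      · intro a ha
        simp only [Finset.mem_Icc] at ha ⊢
        omega
      · intro a _
        show -(-a - (m:ℤ) - 1) - (m:ℤ) - 1 = a
        ring
      · intro a _
        show -(-a - (m:ℤ) - 1) - (m:ℤ) - 1 = a
        ring
      · intro a _
        exact (gg_reflect i j m a).symm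
    have hneg : ∑ k ∈ Finset.Icc (-(m:ℤ)) hi, gg i j m k =
        ∑ k ∈ Finset.Icc (0:ℤ) hi, gg i j m k := by
      rcases hm with rfl | rfl
      · norm_num
      · have hins : Finset.Icc (-((1:ℕ):ℤ)) hi = insert (-1:ℤ) (Finset.Icc (0:ℤ) hi) := by
          ext x
          simp only [Finset.mem_insert, Finset.mem_Icc]
          omega
        rw [hins, Finset.sum_insert (by simp), gg_neg_one, zero_add]
    have hcast : ∑ k ∈ Finset.Icc (0:ℤ) hi, gg i j m k =
        ∑ k ∈ Finset.range (M+1), gg i j m (k : ℤ) := by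
      refine Finset.sum_nbij' (fun k => k.toNat) (fun k => (k : ℤ)) ?_ ?_ ?_ ?_ ?_
      · intro a ha
        simp only [Finset.mem_Icc] at ha
        simp only [Finset.mem_range]
        omega
      · intro a ha
        simp only [Finset.mem_range] at ha
        simp only [Finset.mem_Icc]
        omega
      · intro a ha
        simp only [Finset.mem_Icc] at ha
        show ((a.toNat : ℕ) : ℤ) = a
        omega
      · intro a _
        show ((a : ℤ)).toNat = a
        omega
      · intro a ha
        simp only [Finset.mem_Icc] at ha
        show gg i j m a = gg i j m ((a.toNat : ℕ) : ℤ)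
        congr 1
        omega
    have hbig : ∑ k ∈ Finset.range (min i j + 1), gg i j m (k:ℤ) =
        ∑ k ∈ Finset.range (M+1), gg i j m (k:ℤ) := by
      refine Finset.sum_subset (Finset.range_subset_range.mpr (by omega)) ?_
      intro k hk hnk
      simp only [Finset.mem_range] at hk hnk
      rcases (by omega : i < k ∨ j < k) with h | h
      · rw [gg_cc, cc_zero_of_gt i m k (by omega), zero_mul]
      · rw [gg_cc, show k + j + m = j + k + m by ring, cc_zero_of_gt j m k (by omega),
          mul_zero]
    have hshrink : ∑ k ∈ Finset.range (M+1), gg i j m (k:ℤ) =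
        ∑ k ∈ Finset.range (min i j + 1),
          cc (i + k + m) ((i:ℤ) - (k:ℤ)) * cc (k + j + m) ((j:ℤ) - (k:ℤ)) := by
      rw [← hbig]
      exact Finset.sum_congr rfl (fun k _ => gg_cc i j m k)
    rw [hsplit, hrefl, hneg, hcast, hshrink]
    ring
  have hfinal := mul_left_cancel₀ (show (2:ℤ) ≠ 0 by norm_num) (stepA.symm.trans stepB)
  rw [show m + i + j = N by omega]
  exact hfinal
end

section
/- For m ∈ {0,1}, Σ_{k=i}^{j} c_{j+k+m}^{j−k} · (−1)^{i+k} · C(i+k+m, k−i) = δ_{ij} for all 0 ≤ i ≤ j. -/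
/-- Auxiliary alternating sum `F a d n = ∑_{s=0}^{d} (-1)^s C(n,s) C(a-s, d-s)`. -/
def FF (a d n : ℕ) : ℤ :=
  ∑ s ∈ Finset.range (d + 1), (-1 : ℤ) ^ s * (n.choose s : ℤ) * ((a - s).choose (d - s) : ℤ)

lemma FF_base (a d : ℕ) (h : d ≤ a) : FF a d a = if d = 0 then 1 else 0 := by
  have key : ∀ s ∈ Finset.range (d + 1),
      (-1 : ℤ) ^ s * (a.choose s : ℤ) * ((a - s).choose (d - s) : ℤ)
        = (a.choose d : ℤ) * ((-1 : ℤ) ^ s * (d.choose s : ℤ)) := by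
    intro s hs
    have hsd : s ≤ d := by simpa [Nat.lt_succ_iff] using Finset.mem_range.mp hs
    have := Nat.choose_mul (n := a) (k := d) (s := s) hsd
    have hmul : (a.choose s : ℤ) * ((a - s).choose (d - s) : ℤ)
        = (a.choose d : ℤ) * (d.choose s : ℤ) := by exact_mod_cast (this.symm)
    calc (-1 : ℤ) ^ s * (a.choose s : ℤ) * ((a - s).choose (d - s) : ℤ)
        = (-1 : ℤ) ^ s * ((a.choose s : ℤ) * ((a - s).choose (d - s) : ℤ)) := by ring
      _ = (-1 : ℤ) ^ s * ((a.choose d : ℤ) * (d.choose s : ℤ)) := by rw [hmul]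
      _ = (a.choose d : ℤ) * ((-1 : ℤ) ^ s * (d.choose s : ℤ)) := by ring
  rw [FF, Finset.sum_congr rfl key, ← Finset.mul_sum, Int.alternating_sum_range_choose]
  split_ifs with hd
  · subst hd; simp
  · simp

lemma FF_zero (a n : ℕ) : FF a 0 n = 1 := by simp [FF]

lemma FF_rec (a d n : ℕ) : FF (a + 1) (d + 1) (n + 1) = FF (a + 1) (d + 1) n - FF a d n := by
  have key : FF (a + 1) (d + 1) (n + 1) - FF (a + 1) (d + 1) n = - FF a d n := by
    have step1 : FF (a + 1) (d + 1) (n + 1) - FF (a + 1) (d + 1) n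
        = ∑ s ∈ Finset.range (d + 2),
            (-1 : ℤ) ^ s * (((n + 1).choose s : ℤ) - (n.choose s : ℤ))
              * ((a + 1 - s).choose (d + 1 - s) : ℤ) := by
      rw [FF, FF, ← Finset.sum_sub_distrib]
      exact Finset.sum_congr rfl (fun s _ => by ring)
    rw [step1, Finset.sum_range_succ']
    have h0 : (-1 : ℤ) ^ 0 * (((n + 1).choose 0 : ℤ) - (n.choose 0 : ℤ))
        * ((a + 1 - 0).choose (d + 1 - 0) : ℤ) = 0 := by simp
    rw [h0, add_zero, FF, ← Finset.sum_neg_distrib]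
    refine Finset.sum_congr rfl (fun s hs => ?_)
    have e1 : a + 1 - (s + 1) = a - s := by omega
    have e2 : d + 1 - (s + 1) = d - s := by omega
    have e3 : ((n + 1).choose (s + 1) : ℤ) - (n.choose (s + 1) : ℤ) = (n.choose s : ℤ) := by
      have := Nat.choose_succ_succ' n s
      push_cast [this]; ring
    rw [e1, e2, e3, pow_succ]
    ring
  linarith [key]

lemma FF_val : ∀ d e a : ℕ, d ≤ a → FF a d (a + e) = (-1 : ℤ) ^ d * ((e + d - 1).choose d : ℤ) := by
  intro d
  induction d with
  | zero => intro e a _; simp [FF_zero]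
  | succ d ihd =>
    intro e
    induction e with
    | zero =>
      intro a ha
      have hb := FF_base a (d + 1) ha
      rw [if_neg (Nat.succ_ne_zero d)] at hb
      rw [show a + 0 = a by rfl, hb]
      have : (0 + (d + 1) - 1).choose (d + 1) = 0 := by
        apply Nat.choose_eq_zero_of_lt; omega
      rw [this]; simp
    | succ e ihe =>
      intro a ha
      obtain ⟨a', rfl⟩ : ∃ a', a = a' + 1 := ⟨a - 1, by omega⟩
      have hrec := FF_rec a' d (a' + 1 + e)
      have h1 : a' + 1 + e + 1 = a' + 1 + (e + 1) := by omega
      have h2 : a' + 1 + e = a' + (e + 1) := by omega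
      rw [h1] at hrec
      rw [hrec, ihe (a' + 1) ha, h2, ihd (e + 1) a' (by omega)]
      have e1 : e + (d + 1) - 1 = e + d := by omega
      have e2 : e + 1 + d - 1 = e + d := by omega
      have e3 : e + 1 + (d + 1) - 1 = e + d + 1 := by omega
      rw [e1, e2, e3]
      have pascal : ((e + d + 1).choose (d + 1) : ℤ)
          = ((e + d).choose d : ℤ) + ((e + d).choose (d + 1) : ℤ) := by
        exact_mod_cast Nat.choose_succ_succ' (e + d) d
      rw [pascal, pow_succ]
      ring

theorem hankel_catalan_L_inverse (m : ℕ) (hm : m = 0 ∨ m = 1) (i j : ℕ) (hij : i ≤ j) :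
    ∑ k ∈ Finset.Icc i j,
      cc (j + k + m) ((j : ℤ) - (k : ℤ)) * (-1 : ℤ) ^ (i + k) * ((i + k + m).choose (k - i) : ℤ)
      = (if i = j then 1 else 0) := by
  rcases eq_or_lt_of_le hij with rfl | hlt
  · -- diagonal case
    rw [Finset.Icc_self, Finset.sum_singleton, if_pos rfl]
    have h1 : cc (i + i + m) ((i : ℤ) - (i : ℤ)) = 1 := by
      rw [sub_self, cc, if_pos ⟨le_refl 0, by positivity⟩, if_pos rfl]
      simp
    have h2 : (-1 : ℤ) ^ (i + i) = 1 := by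
      rw [← two_mul, pow_mul]; norm_num
    rw [h1, h2]
    simp
  · -- off-diagonal case
    rw [if_neg (Nat.ne_of_lt hlt)]
    set a := i + j + m with ha
    set d := j - i with hdd
    have hd1 : 1 ≤ d := by omega
    have hda : d ≤ a := by omega
    have ha1 : 1 ≤ a := by omega
    clear_value a d
    -- reindex the sum
    rw [← Finset.Ico_add_one_right_eq_Icc, Finset.sum_Ico_eq_sum_range]
    have hn : j + 1 - i = d + 1 := by omega
    rw [hn]
    rw [← Finset.sum_range_reflect]
    -- termwise rewriting
    have key : ∀ s ∈ Finset.range (d + 1),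
        cc (j + (i + (d + 1 - 1 - s)) + m) ((j : ℤ) - ((i + (d + 1 - 1 - s) : ℕ) : ℤ))
            * (-1 : ℤ) ^ (i + (i + (d + 1 - 1 - s)))
            * ((i + (i + (d + 1 - 1 - s)) + m).choose ((i + (d + 1 - 1 - s)) - i) : ℤ)
          = (-1 : ℤ) ^ (i + j) *
            ((-1 : ℤ) ^ s * ((a + d).choose s : ℤ) * ((a - s).choose (d - s) : ℤ)
              - (-1 : ℤ) ^ s * (if s = 0 then 0 else ((a + d).choose (s - 1) : ℤ))
                  * ((a - s).choose (d - s) : ℤ)) := by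
      intro s hs
      have hsd : s ≤ d := by simpa [Nat.lt_succ_iff] using Finset.mem_range.mp hs
      set k := i + (d + 1 - 1 - s) with hk
      have hkj : k = j - s := by omega
      have hint : (j : ℤ) - (k : ℤ) = (s : ℤ) := by omega
      have hcc : cc (j + k + m) ((j : ℤ) - (k : ℤ))
          = ((a + d).choose s : ℤ) - (if s = 0 then 0 else ((a + d).choose (s - 1) : ℤ)) := by
        rw [cc, if_pos ⟨by omega, by push_cast; omega⟩, hint]
        have htn : ((s : ℤ)).toNat = s := Int.toNat_natCast s
        rw [htn]
        have harg : j + k + m + s = a + d := by omega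
        rw [harg]
        congr 1
        by_cases h0 : s = 0
        · rw [if_pos h0, if_pos (show ((s:ℕ):ℤ) = 0 by exact_mod_cast h0)]
        · rw [if_neg h0, if_neg (by exact_mod_cast h0)]
      have hsgn : (-1 : ℤ) ^ (i + k) = (-1 : ℤ) ^ (i + j) * (-1 : ℤ) ^ s := by
        have hexp : (i + k) + s = (i + j) := by omega
        calc (-1 : ℤ) ^ (i + k)
            = (-1 : ℤ) ^ (i + k) * ((-1 : ℤ) ^ s * (-1 : ℤ) ^ s) := by
              rw [← pow_add, ← two_mul, pow_mul]; norm_num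
          _ = (-1 : ℤ) ^ ((i + k) + s) * (-1 : ℤ) ^ s := by rw [pow_add]; ring
          _ = (-1 : ℤ) ^ (i + j) * (-1 : ℤ) ^ s := by rw [hexp]
      have hch1 : i + k + m = a - s := by omega
      have hch2 : k - i = d - s := by omega
      rw [hcc, hsgn, hch1, hch2]
      ring
    rw [Finset.sum_congr rfl key, ← Finset.mul_sum, Finset.sum_sub_distrib]
    -- identify the two sums with FF
    have hS1 : ∑ s ∈ Finset.range (d + 1),
        (-1 : ℤ) ^ s * ((a + d).choose s : ℤ) * ((a - s).choose (d - s) : ℤ)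
        = FF a d (a + d) := rfl
    obtain ⟨d', rfl⟩ : ∃ d', d = d' + 1 := ⟨d - 1, by omega⟩
    obtain ⟨a', rfl⟩ : ∃ a', a = a' + 1 := ⟨a - 1, by omega⟩
    have hS2 : ∑ s ∈ Finset.range (d' + 1 + 1),
        (-1 : ℤ) ^ s * (if s = 0 then 0 else (((a' + 1) + (d' + 1)).choose (s - 1) : ℤ))
          * (((a' + 1) - s).choose ((d' + 1) - s) : ℤ)
        = - FF a' d' ((a' + 1) + (d' + 1)) := by
      rw [Finset.sum_range_succ']
      have h0 : (-1 : ℤ) ^ 0 * (if (0 : ℕ) = 0 then 0 else (((a' + 1) + (d' + 1)).choose (0 - 1) : ℤ))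
          * (((a' + 1) - 0).choose ((d' + 1) - 0) : ℤ) = 0 := by simp
      rw [h0, add_zero, FF, ← Finset.sum_neg_distrib]
      refine Finset.sum_congr rfl (fun s _ => ?_)
      rw [if_neg (Nat.succ_ne_zero s)]
      have e1 : a' + 1 - (s + 1) = a' - s := by omega
      have e2 : d' + 1 - (s + 1) = d' - s := by omega
      have e3 : s + 1 - 1 = s := by omega
      rw [e1, e2, e3, pow_succ]
      ring
    rw [hS1, hS2]
    have hv1 : FF (a' + 1) (d' + 1) ((a' + 1) + (d' + 1))
        = (-1 : ℤ) ^ (d' + 1) * (((d' + 1) + (d' + 1) - 1).choose (d' + 1) : ℤ) :=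
      FF_val (d' + 1) (d' + 1) (a' + 1) hda
    have hv2 : FF a' d' ((a' + 1) + (d' + 1))
        = (-1 : ℤ) ^ d' * (((d' + 2) + d' - 1).choose d' : ℤ) := by
      have : (a' + 1) + (d' + 1) = a' + (d' + 2) := by omega
      rw [this]
      exact FF_val d' (d' + 2) a' (by omega)
    rw [hv1, hv2]
    have e1 : (d' + 1) + (d' + 1) - 1 = 2 * d' + 1 := by omega
    have e2 : (d' + 2) + d' - 1 = 2 * d' + 1 := by omega
    have hsymm : (2 * d' + 1).choose d' = (2 * d' + 1).choose (d' + 1) :=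
      (Nat.choose_symm_half d').symm
    rw [e1, e2, hsymm, pow_succ]
    ring
end

section
/- Define noncommutative polynomials C̲_n in two noncommuting variables x₀, x₁ over ℤ by C̲_0 = 1 and C̲_{n+1} = Σ_{k=0}^{n} C̲_k · x₀ · C̲_{n−k} · x₁. Then also C̲_{n+1} = Σ_{k=0}^{n} x₀ · C̲_k · x₁ · C̲_{n−k} for all n ≥ 0. -/
noncomputable abbrev x₀ : FreeAlgebra ℤ (Fin 2) := FreeAlgebra.ι ℤ 0
noncomputable abbrev x₁ : FreeAlgebra ℤ (Fin 2) := FreeAlgebra.ι ℤ 1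

/-! With `a` read as an up-step and `b` as a down-step, `C n` is the sum of all Dyck words of
semilength `n`: the given recursion splits a nonempty Dyck word at its last return to the axis,
`w = u a v b`, while the other one splits it at its first return, `w = a u b v`.

Algebraically, by strong induction: peel off the term with `u` empty on one side and `v` empty on
the other; what remains on both sides is the same sum of words `a u b v a w b` over all triples of
Dyck words `u, v, w` of the right total semilength, once grouped as `(a u b v) (a w b)` and once as
`(a u b) (v a w b)`. -/

open Finset

theorem Finset.Nat.sum_antidiagonal_sum_antidiagonal_fst {M : Type*} [AddCommMonoid M]
    (f : ℕ → ℕ → ℕ → M) (n : ℕ) :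
    ∑ p ∈ antidiagonal n, ∑ q ∈ antidiagonal p.1, f q.1 q.2 p.2 =
      ∑ p ∈ antidiagonal n, ∑ q ∈ antidiagonal p.2, f p.1 q.1 q.2 := by
  simp only [sum_sigma']
  apply sum_nbij' (fun ⟨⟨_, j⟩, ⟨k, l⟩⟩ ↦ ⟨(k, l + j), (l, j)⟩)
    (fun ⟨⟨i, _⟩, ⟨k, l⟩⟩ ↦ ⟨(i + k, l), (i, k)⟩) <;> aesop (add simp [add_assoc])

theorem succ_eq_sum_first_return_of_last_return {R : Type*} [Semiring R] (a b : R) {C : ℕ → R}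
    (h0 : C 0 = 1) (hrec : ∀ n, C (n + 1) = ∑ p ∈ antidiagonal n, C p.1 * a * C p.2 * b)
    (n : ℕ) : C (n + 1) = ∑ p ∈ antidiagonal n, a * C p.1 * b * C p.2 := by
  induction n using Nat.strong_induction_on with
  | _ n ih =>
  cases n with
  | zero => simp [hrec, h0]
  | succ n =>
    have hhead : ∀ p ∈ antidiagonal n, C (p.1 + 1) * a * C p.2 * b =
        ∑ q ∈ antidiagonal p.1, a * C q.1 * b * C q.2 * (a * C p.2 * b) := fun p hp ↦ by
      rw [ih p.1 (by linarith [mem_antidiagonal.mp hp]), sum_mul, sum_mul, sum_mul]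
      simp only [mul_assoc]
    calc C (n + 1 + 1)
        = a * C (n + 1) * b + ∑ p ∈ antidiagonal n, C (p.1 + 1) * a * C p.2 * b := by
          rw [hrec, Nat.sum_antidiagonal_succ, h0, one_mul]
      _ = a * C (n + 1) * b + ∑ p ∈ antidiagonal n,
            ∑ q ∈ antidiagonal p.2, a * C p.1 * b * C q.1 * (a * C q.2 * b) := by
          rw [sum_congr rfl hhead, Nat.sum_antidiagonal_sum_antidiagonal_fst
            (fun i j k ↦ a * C i * b * C j * (a * C k * b))]
      _ = a * C (n + 1) * b + ∑ p ∈ antidiagonal n, a * C p.1 * b * C (p.2 + 1) := by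
          simp only [hrec, mul_sum, mul_assoc]
      _ = ∑ p ∈ antidiagonal (n + 1), a * C p.1 * b * C p.2 := by
          rw [Nat.sum_antidiagonal_succ', h0, mul_one]

theorem underline_catalan_other_recursion (C : ℕ → FreeAlgebra ℤ (Fin 2))
    (h0 : C 0 = 1)
    (hrec : ∀ n, C (n + 1) = ∑ k ∈ Finset.range (n + 1), C k * x₀ * C (n - k) * x₁) :
    ∀ n, C (n + 1) = ∑ k ∈ Finset.range (n + 1), x₀ * C k * x₁ * C (n - k) := by
  intro n
  have hrec' : ∀ n, C (n + 1) = ∑ p ∈ antidiagonal n, C p.1 * x₀ * C p.2 * x₁ := fun n ↦ by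
    rw [hrec, Nat.sum_antidiagonal_eq_sum_range_succ (fun i j ↦ C i * x₀ * C j * x₁)]
  rw [← Nat.sum_antidiagonal_eq_sum_range_succ (fun i j ↦ x₀ * C i * x₁ * C j)]
  exact succ_eq_sum_first_return_of_last_return x₀ x₁ h0 hrec' n
end

section
/- Let C̲_n ∈ ℤ⟨x₀,x₁⟩ be defined by C̲_0 = 1 and C̲_{n+1} = Σ_{k=0}^{n} C̲_k x₀ C̲_{n−k} x₁. Then each C̲_n is invariant under the anti-automorphism of ℤ⟨x₀,x₁⟩ that interchanges x₀ and x₁ (and reverses order of multiplication). -/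
/-- The anti-automorphism interchanging `x₀` and `x₁`, encoded as an algebra map into the
multiplicative opposite. -/
noncomputable abbrev τ : FreeAlgebra ℤ (Fin 2) →ₐ[ℤ] (FreeAlgebra ℤ (Fin 2))ᵐᵒᵖ :=
  FreeAlgebra.lift ℤ (fun i : Fin 2 =>
    MulOpposite.op (FreeAlgebra.ι ℤ (if i = 0 then 1 else 0)))

open Finset PowerSeries

theorem PowerSeries.coeff_mk_mul_C_mul_mk {R : Type*} [Semiring R] (a : R) (c : ℕ → R) (n : ℕ) :
    coeff n (mk c * C a * mk c) = ∑ ij ∈ antidiagonal n, c ij.1 * a * c ij.2 := by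
  rw [coeff_mul]
  simp [coeff_mul_C]

section

variable {R : Type*} [Ring R] {a b : R} {c : ℕ → R}

theorem catalan_recursion_left_of_right (h0 : c 0 = 1)
    (hrec : ∀ n, c (n + 1) = ∑ ij ∈ antidiagonal n, c ij.1 * a * c ij.2 * b) (n : ℕ) :
    c (n + 1) = ∑ ij ∈ antidiagonal n, a * c ij.1 * b * c ij.2 := by
  set G : R⟦X⟧ := mk c
  set A : R⟦X⟧ := X * (C a * G * C b)
  have hG : G * (1 - A) = 1 := by
    rw [mul_sub, mul_one, sub_eq_iff_eq_add]
    ext (_ | m)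
    · simp [G, A, h0]
    · simp [G, A, ← mul_assoc, ← (commute_X _).eq, coeff_mk_mul_C_mul_mk, hrec, sum_mul]
  obtain ⟨u, hu⟩ : IsUnit (1 - A) := by simp [isUnit_iff_constantCoeff, A]
  have hG' : (1 - A) * G = 1 := by
    rw [← hu, ← u.inv_eq_of_mul_eq_one_left (a := G) (hu ▸ hG), Units.mul_inv]
  have hAG : A * G = X * (C a * (G * C b * G)) := by simp only [A, mul_assoc]
  have hcoeff := congrArg (coeff (n + 1)) hG'
  rw [sub_mul, one_mul, map_sub, sub_eq_iff_eq_add, hAG, coeff_succ_X_mul, coeff_C_mul,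
    coeff_mk_mul_C_mul_mk, mul_sum] at hcoeff
  simpa [G, mul_assoc] using hcoeff

theorem map_eq_op_of_catalan_recursion (σ : R →+* Rᵐᵒᵖ) (hσa : σ a = MulOpposite.op b)
    (hσb : σ b = MulOpposite.op a) (h0 : c 0 = 1)
    (hrec : ∀ n, c (n + 1) = ∑ ij ∈ antidiagonal n, c ij.1 * a * c ij.2 * b) (n : ℕ) :
    σ (c n) = MulOpposite.op (c n) := by
  induction n using Nat.strong_induction_on with
  | _ n ih =>
    cases n with
    | zero => simp [h0]
    | succ n =>
      have hterm : ∀ ij ∈ antidiagonal n,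
          σ (c ij.1 * a * c ij.2 * b) = MulOpposite.op (a * c ij.2 * b * c ij.1) := by
        intro ij hij
        rw [HasAntidiagonal.mem_antidiagonal] at hij
        simp [ih ij.1 (by omega), ih ij.2 (by omega), hσa, hσb, mul_assoc]
      calc σ (c (n + 1)) = ∑ ij ∈ antidiagonal n, σ (c ij.1 * a * c ij.2 * b) := by
            rw [hrec n, map_sum]
        _ = MulOpposite.op (∑ ij ∈ antidiagonal n, a * c ij.2 * b * c ij.1) := by
            rw [sum_congr rfl hterm, Finset.op_sum]
        _ = MulOpposite.op (c (n + 1)) := by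
            rw [catalan_recursion_left_of_right h0 hrec, ← Nat.sum_antidiagonal_swap]
            rfl

end

theorem underline_catalan_anti_invariant (C : ℕ → FreeAlgebra ℤ (Fin 2))
    (h0 : C 0 = 1)
    (hrec : ∀ n, C (n + 1) = ∑ k ∈ Finset.range (n + 1), C k * x₀ * C (n - k) * x₁) :
    ∀ n, τ (C n) = MulOpposite.op (C n) :=
  map_eq_op_of_catalan_recursion τ.toRingHom (a := x₀) (b := x₁) (by simp) (by simp) h0
    fun n => by rw [hrec n, Nat.sum_antidiagonal_eq_sum_range_succ (fun i j => C i * x₀ * C j * x₁)]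
end

section
/- Define polynomials c_n^k(q) ∈ ℤ[q] by c_n^0(q) = 1 and the recursion c_{n+1}^k(q) = Σ_{i=0}^{k} c_i^i(q) · q^{k−i} · c_{n−i}^{k−i}(q) for 0 ≤ k ≤ n (with c_{n+1}^{n+1}(q) := c_{n+1}^n(q)). Then for m ∈ {0,1} and n ≥ 0, the determinant of the (n+1)×(n+1) matrix with (i,j)-entry c_{i+j+m}^{i+j+m}(q) equals q^{n(n+1)(4n−1+6m)/6}. -/
/-!
Put `A s r = c_{r+s}^r`. The recursion says that the row `A (s+1)` is the convolution of the
Catalan numbers `A 0` with `j ↦ q^j A s j`; together with `c_{n+1}^{n+1} = c_{n+1}^n` this gives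
the Pascal rule `A (s+1) (r+1) = A s (r+1) + q^(s+1) A (s+2) r`. Splitting the terms of
`S m i d = ∑_{k+r=i} A (2k+m) r · q^C(2k+m,2) · A (2k+m) (r+d)` by this rule shows
`S 0 i (d+1) = S 1 i d` and `S 1 i (d+1) = S 0 (i+1) d`, so `S m i d = c_{2i+m+d}`: an
`L D Lᵀ` factorization of the Hankel matrix with `L i k = A (2k+m) (i-k)` unitriangular and
`D k = q^C(2k+m,2)`.
-/

open Polynomial Finset
open scoped Matrix

theorem Finset.Nat.sum_antidiagonal_eq_add_of_telescope {M : Type*} [AddCommMonoid M]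
    {f g F e : ℕ × ℕ → M} {b : ℕ → M}
    (hf₀ : ∀ k, f (k, 0) = F (k, 0)) (hf : ∀ k r, f (k, r + 1) = F (k, r + 1) + e (k, r))
    (hg₀ : ∀ r, g (0, r) = F (0, r) + b r)
    (hg : ∀ k r, g (k + 1, r) = F (k + 1, r) + e (k, r))
    (n : ℕ) : ∑ p ∈ antidiagonal n, g p = ∑ p ∈ antidiagonal n, f p + b n := by
  cases n with
  | zero => simp [hf₀, hg₀]
  | succ n =>
    have hF₁ := Nat.sum_antidiagonal_succ (f := F) (n := n)
    have hF₂ := Nat.sum_antidiagonal_succ' (f := F) (n := n)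
    rw [Nat.sum_antidiagonal_succ, Nat.sum_antidiagonal_succ', hg₀, hf₀]
    simp only [hf, hg, sum_add_distrib, ← add_assoc]
    rw [add_right_comm (F _), ← hF₁, ← hF₂, add_right_comm]

theorem pow_choose_two_succ {M : Type*} [Monoid M] (q : M) (s : ℕ) :
    q ^ (s + 1).choose 2 = q ^ s.choose 2 * q ^ s := by
  rw [Nat.choose_succ_succ', Nat.choose_one_right, ← pow_add, add_comm]

section HankelFactorization

variable {R : Type*} [CommRing R] (q : R) (A : ℕ → ℕ → R)

theorem pascal_of_convolution (hA₀ : ∀ s, A s 0 = 1) (hdiag : ∀ r, A 1 r = A 0 (r + 1))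
    (hconv : ∀ s k, A (s + 1) k = ∑ p ∈ antidiagonal k, A 0 p.1 * q ^ p.2 * A s p.2)
    (s r : ℕ) : A (s + 1) (r + 1) = A s (r + 1) + q ^ (s + 1) * A (s + 2) r := by
  induction s generalizing r with
  | zero =>
    rw [hconv 0 (r + 1), Nat.sum_antidiagonal_succ', hconv 1 r, mul_sum]
    simp only [hA₀, hdiag, pow_zero, mul_one]
    congr 1
    refine sum_congr rfl fun p _ => ?_
    ring
  | succ s ih =>
    rw [hconv (s + 1) (r + 1), hconv s (r + 1), hconv (s + 2) r, Nat.sum_antidiagonal_succ',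
      Nat.sum_antidiagonal_succ', mul_sum]
    simp only [ih, hA₀]
    rw [add_assoc, ← sum_add_distrib]
    congr 1
    refine sum_congr rfl fun p _ => ?_
    ring

def hankelFactorSum (m i d : ℕ) : R :=
  ∑ p ∈ antidiagonal i,
    A (2 * p.1 + m) p.2 * q ^ (2 * p.1 + m).choose 2 * A (2 * p.1 + m) (p.2 + d)

def hankelLowerFactor (m n : ℕ) : Matrix (Fin n) (Fin n) R :=
  Matrix.of fun i k => if (k : ℕ) ≤ i then A (2 * k + m) (i - k) else 0

variable {q A} (hA₀ : ∀ s, A s 0 = 1) (hdiag : ∀ r, A 1 r = A 0 (r + 1))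
  (hpascal : ∀ s r, A (s + 1) (r + 1) = A s (r + 1) + q ^ (s + 1) * A (s + 2) r)

include hpascal in
theorem pascal_split_left (s r d : ℕ) :
    A (s + 1) (r + 1) * q ^ (s + 1).choose 2 * A (s + 1) (r + 1 + d) =
      A s (r + 1) * q ^ (s + 1).choose 2 * A (s + 1) (r + 1 + d) +
        A (s + 2) r * q ^ (s + 2).choose 2 * A (s + 1) (r + 1 + d) := by
  rw [hpascal, show q ^ (s + 2).choose 2 = _ from pow_choose_two_succ q (s + 1)]
  ring

include hpascal in
theorem pascal_split_right (s r d : ℕ) :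
    A (s + 1) r * q ^ (s + 1).choose 2 * A (s + 1) (r + (d + 1)) =
      A (s + 1) r * q ^ (s + 2).choose 2 * A (s + 2) (r + d) +
        A (s + 1) r * q ^ (s + 1).choose 2 * A s (r + 1 + d) := by
  rw [← add_assoc, hpascal, add_right_comm r d 1,
    show q ^ (s + 2).choose 2 = _ from pow_choose_two_succ q (s + 1)]
  ring

include hA₀ hdiag hpascal in
theorem hankelFactorSum_zero_succ_right (i d : ℕ) :
    hankelFactorSum q A 0 i (d + 1) = hankelFactorSum q A 1 i d :=
  (Nat.sum_antidiagonal_eq_add_of_telescope (b := fun _ => 0)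
    (F := fun p => A (2 * p.1) p.2 * q ^ (2 * p.1 + 1).choose 2 * A (2 * p.1 + 1) (p.2 + d))
    (e := fun p =>
      A (2 * p.1 + 2) p.2 * q ^ (2 * p.1 + 2).choose 2 * A (2 * p.1 + 1) (p.2 + 1 + d))
    (fun k => by simp only [hA₀]) (fun k r => pascal_split_left hpascal (2 * k) r d)
    (fun r => by simp [hdiag, add_assoc])
    (fun k r => pascal_split_right hpascal (2 * k + 1) r d) i).trans (add_zero _)

include hA₀ hdiag hpascal in
theorem hankelFactorSum_one_succ_right (i d : ℕ) :
    hankelFactorSum q A 1 i (d + 1) = hankelFactorSum q A 0 (i + 1) d := by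
  rw [hankelFactorSum, hankelFactorSum, Nat.sum_antidiagonal_succ]
  refine (Nat.sum_antidiagonal_eq_add_of_telescope
    (f := fun p => A (2 * (p.1 + 1) + 0) p.2 * q ^ (2 * (p.1 + 1) + 0).choose 2 *
      A (2 * (p.1 + 1) + 0) (p.2 + d))
    (F := fun p => A (2 * p.1 + 1) p.2 * q ^ (2 * p.1 + 2).choose 2 * A (2 * p.1 + 2) (p.2 + d))
    (e := fun p =>
      A (2 * p.1 + 3) p.2 * q ^ (2 * p.1 + 3).choose 2 * A (2 * p.1 + 2) (p.2 + 1 + d))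
    (fun k => by simp only [hA₀]; rfl)
    (fun k r => pascal_split_left hpascal (2 * k + 1) r d)
    (fun r => pascal_split_right hpascal 0 r d)
    (fun k r => pascal_split_right hpascal (2 * k + 2) r d) i).trans ?_
  rw [add_comm]
  simp [hdiag]

include hA₀ hdiag hpascal in
theorem hankelFactorSum_eq (m i d : ℕ) (hm : m = 0 ∨ m = 1) :
    hankelFactorSum q A m i d = A 0 (2 * i + m + d) := by
  have hzero : ∀ i d, hankelFactorSum q A 0 i d = A 0 (2 * i + d) := by
    intro i
    induction i with
    | zero => intro d; simp [hankelFactorSum, hA₀]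
    | succ i ih =>
      intro d
      rw [← hankelFactorSum_one_succ_right hA₀ hdiag hpascal,
        ← hankelFactorSum_zero_succ_right hA₀ hdiag hpascal, ih]
      congr 1
      ring
  rcases hm with rfl | rfl
  · exact hzero i d
  · rw [← hankelFactorSum_zero_succ_right hA₀ hdiag hpascal, hzero]
    congr 1
    ring

include hA₀ hdiag hpascal in
theorem sum_range_lowerFactor_mul_eq {m i j n : ℕ} (hm : m = 0 ∨ m = 1) (hij : i ≤ j)
    (hjn : j < n) :
    ∑ k ∈ range n, (if k ≤ i then A (2 * k + m) (i - k) else 0) * q ^ (2 * k + m).choose 2 *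
      (if k ≤ j then A (2 * k + m) (j - k) else 0) = A 0 (i + j + m) := by
  calc _ = ∑ k ∈ range n with k ≤ i, A (2 * k + m) (i - k) * q ^ (2 * k + m).choose 2 *
          A (2 * k + m) (j - k) := by
        rw [sum_filter]
        refine sum_congr rfl fun k _ => ?_
        split_ifs with hki hkj
        · rfl
        · exact absurd (hki.trans hij) hkj
        all_goals simp
    _ = hankelFactorSum q A m i (j - i) := by
        rw [hankelFactorSum, Nat.sum_antidiagonal_eq_sum_range_succ_mk,
          show (range n).filter (· ≤ i) = range (i + 1) by ext; simp; omega]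
        refine sum_congr rfl fun k hk => ?_
        rw [show i - k + (j - i) = j - k by simp at hk; omega]
    _ = A 0 (i + j + m) := by
        rw [hankelFactorSum_eq hA₀ hdiag hpascal m i (j - i) hm]
        congr 1
        omega

include hA₀ hdiag hpascal in
theorem hankel_eq_lower_mul_diagonal_mul_transpose (m n : ℕ) (hm : m = 0 ∨ m = 1) :
    Matrix.of (fun i j : Fin n => A 0 (i + j + m)) =
      hankelLowerFactor A m n *
        Matrix.diagonal (fun k : Fin n => q ^ (2 * (k : ℕ) + m).choose 2) *
        (hankelLowerFactor A m n)ᵀ := by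
  ext i j
  rw [Matrix.mul_apply]
  simp only [Matrix.of_apply, Matrix.mul_diagonal, Matrix.transpose_apply, hankelLowerFactor]
  rw [Fin.sum_univ_eq_sum_range (fun k => (if k ≤ (i : ℕ) then A (2 * k + m) (i - k) else 0) *
    q ^ (2 * k + m).choose 2 * (if k ≤ (j : ℕ) then A (2 * k + m) (j - k) else 0))]
  rcases le_total (i : ℕ) j with hij | hji
  · exact (sum_range_lowerFactor_mul_eq hA₀ hdiag hpascal hm hij j.isLt).symm
  · rw [add_comm (i : ℕ), ← sum_range_lowerFactor_mul_eq hA₀ hdiag hpascal hm hji i.isLt]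
    exact sum_congr rfl fun k _ => by ring

include hA₀ in
theorem det_hankelLowerFactor (m n : ℕ) : (hankelLowerFactor A m n).det = 1 := by
  have hlower : (hankelLowerFactor A m n).IsLowerTriangular := fun a b hab =>
    if_neg (by simpa using hab)
  rw [Matrix.det_of_isLowerTriangular _ hlower]
  exact Finset.prod_eq_one fun a _ => by simp [hankelLowerFactor, hA₀]

include hA₀ hdiag hpascal in
theorem det_hankel_eq_pow_sum_choose_two (m n : ℕ) (hm : m = 0 ∨ m = 1) :
    (Matrix.of fun i j : Fin n => A 0 (i + j + m)).det =
      q ^ ∑ k ∈ range n, (2 * k + m).choose 2 := by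
  rw [hankel_eq_lower_mul_diagonal_mul_transpose hA₀ hdiag hpascal m n hm, Matrix.det_mul,
    Matrix.det_mul, Matrix.det_transpose, det_hankelLowerFactor hA₀, Matrix.det_diagonal,
    prod_pow_eq_pow_sum, Fin.sum_univ_eq_sum_range (fun k => (2 * k + m).choose 2), one_mul,
    mul_one]

end HankelFactorization

theorem sum_range_choose_two_two_mul_add (n m : ℕ) (hm : m = 0 ∨ m = 1) :
    ∑ k ∈ range (n + 1), (2 * k + m).choose 2 = n * (n + 1) * (4 * n + 6 * m - 1) / 6 := by
  have hsq : m * m = m := by rcases hm with rfl | rfl <;> rfl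
  -- `4 * n + 6 * m - 1` truncates at `n = m = 0`, so first a subtraction-free form.
  have hsix : ∀ n, 6 * ∑ k ∈ range (n + 1), (2 * k + m).choose 2 + n * (n + 1) =
      2 * n * (n + 1) * (2 * n + 3 * m) := by
    intro n
    induction n with
    | zero => rcases hm with rfl | rfl <;> rfl
    | succ n ih =>
      have hchoose : (2 * (n + 1) + m).choose 2 * 2 = (2 * n + m + 2) * (2 * n + m + 1) := by
        rw [show 2 * (n + 1) + m = 2 * n + m + 1 + 1 by ring, ← Nat.add_one_mul_choose_eq,
          Nat.choose_one_right]
      rw [sum_range_succ]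
      zify at ih hchoose hsq ⊢
      linear_combination ih + 3 * hchoose + 3 * hsq
  cases n with
  | zero => rcases hm with rfl | rfl <;> rfl
  | succ n =>
    rw [show 4 * (n + 1) + 6 * m - 1 = 4 * n + 6 * m + 3 by omega]
    refine (Nat.div_eq_of_eq_mul_left (by norm_num) ?_).symm
    have := hsix (n + 1)
    zify at this ⊢
    linear_combination -this

theorem sum_antidiagonal_of_catalan_recursion {R : Type*} [CommRing R] {q : R}
    {c : ℕ → ℕ → R}
    (hrec : ∀ n k, k ≤ n →
      c (n + 1) k = ∑ i ∈ range (k + 1), c i i * q ^ (k - i) * c (n - i) (k - i))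
    (s k : ℕ) :
    c (k + (s + 1)) k = ∑ p ∈ antidiagonal k, c p.1 p.1 * q ^ p.2 * c (p.2 + s) p.2 := by
  rw [← add_assoc, hrec _ _ (Nat.le_add_right k s),
    Nat.sum_antidiagonal_eq_sum_range_succ (fun i j => c i i * q ^ j * c (j + s) j)]
  refine sum_congr rfl fun i hi => ?_
  rw [show k + s - i = k - i + s by simp at hi; omega]

theorem qCatalan_hankel_det (c : ℕ → ℕ → Polynomial ℤ)
    (h0 : ∀ n, c n 0 = 1)
    (hrec : ∀ n k, k ≤ n →
      c (n + 1) k = ∑ i ∈ Finset.range (k + 1), c i i * X ^ (k - i) * c (n - i) (k - i))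
    (htop : ∀ n, c (n + 1) (n + 1) = c (n + 1) n)
    (n m : ℕ) (hm : m = 0 ∨ m = 1) :
    Matrix.det (Matrix.of fun i j : Fin (n + 1) =>
        c ((i : ℕ) + (j : ℕ) + m) ((i : ℕ) + (j : ℕ) + m)) =
      X ^ (n * (n + 1) * (4 * n + 6 * m - 1) / 6) := by
  -- `A s r = c_{r+s}^r`; written `r + s` so that `A 0 r` is `c r r` by definition.
  set A : ℕ → ℕ → ℤ[X] := fun s r => c (r + s) r
  have hA₀ : ∀ s, A s 0 = 1 := fun s => h0 _
  have hdiag : ∀ r, A 1 r = A 0 (r + 1) := fun r => (htop r).symm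
  have hpascal := pascal_of_convolution X A hA₀ hdiag (sum_antidiagonal_of_catalan_recursion hrec)
  rw [← sum_range_choose_two_two_mul_add n m hm]
  exact det_hankel_eq_pow_sum_choose_two hA₀ hdiag hpascal m (n + 1) hm
end

section
/- In the free ℤ-algebra ℤ⟨y_1, y_2, ...⟩, define B'(n,k) = Σ_J y_{j_1+k−1}·y_{j_2+k−3}···y_{j_k+1−k}, summing over all subsets J = {j_1 < ... < j_k} of {1,...,n} (B'(n,0)=1, B'(n,k)=0 for k>n). Let T be the algebra endomorphism with T(y_i) = y_{i+1}. Then B'(m+n, k) = Σ_{a+b=k, a,b ≥ 0} T^b(B'(m,a)) · T^{m−a}(B'(n,b)) for all m, n, k ≥ 0. -/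
/-!
Split a `k`-subset `J ⊆ {1, …, m + n}` into `A = J ∩ {1, …, m}`, of size `a`, and the rest,
which is `B + m` for some `(k - a)`-subset `B ⊆ {1, …, n}`. The sorted list of `J` is that of
`A` followed by that of `B + m`, so the word of `J` is the word of `A` with every index raised
by `k - a`, times the word of `B` with every index raised by `m - a`; these raisings are
`T^(k-a)` and `T^(m-a)`.
-/

/-- Noncommutative binomial coefficient of the second kind:
`B'(n,k) = Σ_{J={j₁<⋯<j_k}⊆[1,n]} y_{j₁+k-1} y_{j₂+k-3} ⋯ y_{j_k+1-k}`. -/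
noncomputable def ncBinom' (n k : ℕ) : FreeAlgebra ℤ ℕ :=
  ∑ J ∈ Finset.powersetCard k (Finset.Icc 1 n),
    ((J.sort (· ≤ ·)).zipIdx.map (fun p => FreeAlgebra.ι ℤ (p.1 + k - (2 * p.2 + 1)))).prod

/-- The shift endomorphism `T(y_i) = y_{i+1}`. -/
noncomputable def T : FreeAlgebra ℤ ℕ →ₐ[ℤ] FreeAlgebra ℤ ℕ :=
  FreeAlgebra.lift ℤ (fun i => FreeAlgebra.ι ℤ (i + 1))

theorem List.snd_lt_fst_of_mem_zipIdx {l : List ℕ} {s : ℕ} (hl : l.Pairwise (· < ·))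
    (hs : ∀ x ∈ l, s < x) : ∀ p ∈ l.zipIdx s, p.2 < p.1 := by
  induction l generalizing s with
  | nil => simp
  | cons j t ih =>
    rw [List.pairwise_cons] at hl
    have hj : s < j := hs j List.mem_cons_self
    rintro p (_ | ⟨_, hp⟩)
    · exact hj
    · exact ih hl.2 (fun x hx => by have := hl.1 x hx; omega) p hp

namespace Finset

variable {α M : Type*}

theorem sort_union_of_forall_lt [LinearOrder α] {s t : Finset α}
    (h : ∀ a ∈ s, ∀ b ∈ t, a < b) : (s ∪ t).sort = s.sort ++ t.sort := by
  have hlt : (s.sort ++ t.sort).Pairwise (· < ·) :=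
    List.pairwise_append.mpr ⟨List.sortedLT_iff_pairwise.mp s.sortedLT_sort,
      List.sortedLT_iff_pairwise.mp t.sortedLT_sort,
      fun a ha b hb => h a ((mem_sort _).mp ha) b ((mem_sort _).mp hb)⟩
  have hset : (s.sort ++ t.sort).toFinset = s ∪ t := by
    rw [List.toFinset_append, sort_toFinset, sort_toFinset]
  rw [← hset, List.toFinset_sort _ hlt.nodup]
  exact hlt.imp le_of_lt

theorem sum_powersetCard_union [DecidableEq α] [AddCommMonoid M] {s t : Finset α}
    (hst : Disjoint s t) (k : ℕ) (f : Finset α → M) :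
    ∑ J ∈ powersetCard k (s ∪ t), f J =
      ∑ a ∈ range (k + 1), ∑ A ∈ powersetCard a s, ∑ B ∈ powersetCard (k - a) t, f (A ∪ B) := by
  rw [← sum_congr rfl fun a _ => sum_product (powersetCard a s) (powersetCard (k - a) t)
      fun x => f (x.1 ∪ x.2),
    ← sum_sigma _ (fun a => powersetCard a s ×ˢ powersetCard (k - a) t)
      fun x => f (x.2.1 ∪ x.2.2)]
  symm
  refine sum_nbij' (fun x => x.2.1 ∪ x.2.2) (fun J => ⟨#(J ∩ s), J ∩ s, J ∩ t⟩)
    ?_ ?_ ?_ ?_ fun _ _ => rfl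
  · rintro ⟨a, A, B⟩ hx
    simp only [mem_sigma, mem_product, mem_powersetCard, mem_range] at hx
    rw [mem_powersetCard]
    obtain ⟨ha, ⟨hA, rfl⟩, hB, hBcard⟩ := hx
    refine ⟨union_subset_union hA hB, ?_⟩
    rw [card_union_of_disjoint (hst.mono hA hB)]
    omega
  · intro J hJ
    simp only [mem_sigma, mem_product, mem_powersetCard, mem_range, and_true] at hJ ⊢
    obtain ⟨hJst, rfl⟩ := hJ
    have hsplit : #(J ∩ s) + #(J ∩ t) = #J := by
      rw [← card_union_of_disjoint (hst.mono inter_subset_right inter_subset_right),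
        ← inter_union_distrib_left, inter_eq_left.mpr hJst]
    exact ⟨by omega, inter_subset_right, inter_subset_right, by omega⟩
  · rintro ⟨a, A, B⟩ hx
    simp only [mem_sigma, mem_product, mem_powersetCard, mem_range] at hx
    obtain ⟨-, ⟨hA, rfl⟩, hB, -⟩ := hx
    have hAs : (A ∪ B) ∩ s = A := by
      rw [union_inter_distrib_right, inter_eq_left.mpr hA,
        disjoint_iff_inter_eq_empty.mp (hst.symm.mono_left hB), union_empty]
    have hBt : (A ∪ B) ∩ t = B := by
      rw [union_inter_distrib_right, inter_eq_left.mpr hB,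
        disjoint_iff_inter_eq_empty.mp (hst.mono_left hA), empty_union]
    simp only [hAs, hBt]
  · intro J hJ
    rw [mem_powersetCard] at hJ
    rw [← inter_union_distrib_left, inter_eq_left.mpr hJ.1]

end Finset

open Finset

/-- Positions in `l` are numbered from `s`, so that `ncWord` factors along `++`. -/
noncomputable def ncWord (k s : ℕ) (l : List ℕ) : FreeAlgebra ℤ ℕ :=
  ((l.zipIdx s).map fun p => FreeAlgebra.ι ℤ (p.1 + k - (2 * p.2 + 1))).prod

theorem ncBinom'_eq_sum_ncWord (n k : ℕ) :
    ncBinom' n k = ∑ J ∈ powersetCard k (Icc 1 n), ncWord k 0 J.sort :=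
  rfl

theorem ncWord_append (k s : ℕ) (l₁ l₂ : List ℕ) :
    ncWord k s (l₁ ++ l₂) = ncWord k s l₁ * ncWord k (s + l₁.length) l₂ := by
  simp only [ncWord, List.zipIdx_append, List.map_append, List.prod_append]

theorem ncWord_map_add (k s c : ℕ) (l : List ℕ) :
    ncWord k s (l.map (· + c)) = ncWord (k + c) s l := by
  simp only [ncWord, List.zipIdx_map, List.map_map]
  congr 2
  funext p
  simp only [Function.comp_apply, Prod.map_fst, Prod.map_snd, id_eq]
  congr 2
  omega

theorem ncWord_add_add (k s d : ℕ) (l : List ℕ) :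
    ncWord (k + 2 * d) (s + d) l = ncWord k s l := by
  rw [ncWord, ncWord, List.zipIdx_eq_map_add (i := s + d), List.zipIdx_eq_map_add (i := s),
    List.map_map, List.map_map]
  congr 2
  funext ⟨x, i⟩
  simp only [Function.comp_apply]
  congr 1
  omega

theorem iterate_T_ι (r i : ℕ) : (⇑T)^[r] (FreeAlgebra.ι ℤ i) = FreeAlgebra.ι ℤ (i + r) := by
  induction r with
  | zero => rfl
  | succ r ih => rw [Function.iterate_succ_apply', ih, T, FreeAlgebra.lift_ι_apply, add_assoc]

theorem iterate_T_ncWord (r k s : ℕ) (l : List ℕ)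
    (hl : ∀ p ∈ l.zipIdx s, 2 * p.2 + 1 ≤ p.1 + k) :
    (⇑T)^[r] (ncWord k s l) = ncWord (k + r) s l := by
  rw [ncWord, ← AlgHom.coe_pow, map_list_prod, List.map_map, ncWord]
  congr 1
  refine List.map_congr_left fun p hp => ?_
  rw [Function.comp_apply, AlgHom.coe_pow, iterate_T_ι]
  have := hl p hp
  congr 1
  omega

theorem iterate_T_ncWord_sort (r : ℕ) {J : Finset ℕ} (hJ : 0 ∉ J) :
    (⇑T)^[r] (ncWord #J 0 J.sort) = ncWord (#J + r) 0 J.sort := by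
  refine iterate_T_ncWord r _ _ _ fun p hp => ?_
  have hpos := List.snd_lt_fst_of_mem_zipIdx
    (List.sortedLT_iff_pairwise.mp J.sortedLT_sort)
    (fun x hx => Nat.pos_of_ne_zero fun h => hJ (h ▸ (mem_sort _).mp hx)) p hp
  have hlen := (List.mem_zipIdx hp).2.1
  rw [length_sort] at hlen
  omega

theorem ncWord_sort_union {m : ℕ} {A B : Finset ℕ} (hA : A ⊆ Icc 1 m) (hB : 0 ∉ B) :
    ncWord (#A + #B) 0 (A ∪ B.map (addRightEmbedding m)).sort =
      (⇑T)^[#B] (ncWord #A 0 A.sort) * (⇑T)^[m - #A] (ncWord #B 0 B.sort) := by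
  have hAm : #A ≤ m := by simpa using card_le_card hA
  have hsort : (A ∪ B.map (addRightEmbedding m)).sort = A.sort ++ B.sort.map (· + m) := by
    rw [sort_union_of_forall_lt, ← (add_left_strictMono.strictMonoOn _).map_finsetSort]
    · rfl
    intro a ha _ hb
    obtain ⟨b, hbB, rfl⟩ := mem_map.mp hb
    have := (mem_Icc.mp (hA ha)).2
    have : b ≠ 0 := fun h => hB (h ▸ hbB)
    simp only [addRightEmbedding_apply]
    omega
  rw [hsort, ncWord_append, ncWord_map_add, length_sort, zero_add,
    iterate_T_ncWord_sort _ fun h => by simpa using hA h, iterate_T_ncWord_sort _ hB,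
    ← ncWord_add_add (#B + (m - #A)) 0 #A, zero_add]
  congr 2
  omega

theorem ncBinom'_mult (m n k : ℕ) :
    ncBinom' (m + n) k =
      ∑ a ∈ Finset.range (k + 1),
        (⇑T)^[k - a] (ncBinom' m a) * (⇑T)^[m - a] (ncBinom' n (k - a)) := by
  have hsplit : Icc 1 (m + n) = Icc 1 m ∪ (Icc 1 n).map (addRightEmbedding m) := by
    ext x
    simp only [map_add_right_Icc, mem_union, mem_Icc]
    omega
  have hdisj : Disjoint (Icc 1 m) ((Icc 1 n).map (addRightEmbedding m)) := by
    rw [map_add_right_Icc]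
    exact disjoint_left.mpr fun x hx hx' => by simp only [mem_Icc] at hx hx'; omega
  rw [ncBinom'_eq_sum_ncWord, hsplit, sum_powersetCard_union hdisj]
  refine sum_congr rfl fun a ha => ?_
  rw [ncBinom'_eq_sum_ncWord, ncBinom'_eq_sum_ncWord, ← AlgHom.coe_pow, ← AlgHom.coe_pow,
    map_sum, map_sum, AlgHom.coe_pow, AlgHom.coe_pow, sum_mul_sum, powersetCard_map]
  refine sum_congr rfl fun A hA => ?_
  rw [sum_map]
  refine sum_congr rfl fun B hB => ?_
  obtain ⟨hAsub, rfl⟩ := mem_powersetCard.mp hA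
  obtain ⟨hBsub, hBcard⟩ := mem_powersetCard.mp hB
  have hk : k = #A + #B := by rw [hBcard]; have := mem_range.mp ha; omega
  rw [← hBcard, hk]
  exact ncWord_sort_union hAsub fun h => by simpa using hBsub h
end

section
/- In the free ℤ-algebra ℤ⟨y_1, y_2, ...⟩ with shift endomorphism T(y_i) = y_{i+1}, the noncommutative truncated Catalan numbers C̃(n,k) = Σ_{j_1≤...≤j_k≤n, j_s≥s} y_{j_1}y_{j_2−1}···y_{j_k−k+1} satisfy C̃(n+1,k) = Σ_{i=0}^{k} C̃(i,i)·T(C̃(n−i,k−i)) for all 0 ≤ k ≤ n. -/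
/-- Noncommutative truncated Catalan number
`C̃(n,k) = Σ_{j₁≤⋯≤j_k≤n, j_s≥s} y_{j₁} y_{j₂-1} ⋯ y_{j_k-k+1}`. -/
noncomputable def Ctil (n k : ℕ) : FreeAlgebra ℤ ℕ :=
  ∑ j ∈ Finset.univ.filter (fun j : Fin k → Fin (n + 1) =>
      (∀ s t : Fin k, s ≤ t → j s ≤ j t) ∧ ∀ s : Fin k, (s : ℕ) + 1 ≤ ((j s) : ℕ)),
    (List.ofFn (fun s : Fin k => FreeAlgebra.ι ℤ (((j s) : ℕ) - (s : ℕ)))).prod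

/-!
Splitting off the last index `j_{k+1}` (either `≤ n` or `= n + 1`) gives the Pascal-type
recursion `C̃(n+1,k+1) = C̃(n,k+1) + C̃(n+1,k) y_{n+1-k}` for `k ≤ n`. Applying it inside `T`,
which turns `y_{n-k+1}` into `y_{n-k+2}`, shows that `Σᵢ C̃(i,i) T(C̃(n-i,k-i))` satisfies the
same recursion, so both sides agree by induction on `n + k`. The induction closes because the
identity persists at `k = n + 1`, where both sides collapse to `C̃(n+1,n+1)`.
-/

theorem Fin.monotone_snoc {α : Type*} [Preorder α] {k : ℕ} {u : Fin k → α} {x : α}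
    (hu : Monotone u) (hx : ∀ s, u s ≤ x) : Monotone (Fin.snoc u x : Fin (k + 1) → α) := by
  intro a b hab
  induction b using Fin.lastCases with
  | last =>
    induction a using Fin.lastCases with
    | last => exact le_rfl
    | cast a => simpa only [Fin.snoc_castSucc, Fin.snoc_last] using hx a
  | cast b =>
    induction a using Fin.lastCases with
    | last => exact absurd hab (not_le.2 (Fin.castSucc_lt_last b))
    | cast a =>
      simpa only [Fin.snoc_castSucc] using hu (Fin.castSucc_le_castSucc_iff.1 hab)

open Finset FreeAlgebra

theorem T_ι (m : ℕ) : T (ι ℤ m) = ι ℤ (m + 1) :=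
  lift_ι_apply _ _

namespace Ctil

open Classical in
/-- The index tuples of `Ctil n k`, with entries read in `ℕ` so that the bound `n` can vary
without recasting. -/
noncomputable def indexSet (n k : ℕ) : Finset (Fin k → ℕ) :=
  {v ∈ Fintype.piFinset fun _ => range (n + 1) | Monotone v ∧ ∀ s : Fin k, (s : ℕ) + 1 ≤ v s}

def word {k : ℕ} (v : Fin k → ℕ) : FreeAlgebra ℤ ℕ :=
  (List.ofFn fun s => ι ℤ (v s - s)).prod

theorem mem_indexSet {n k : ℕ} {v : Fin k → ℕ} :
    v ∈ indexSet n k ↔ (∀ s, v s ≤ n) ∧ Monotone v ∧ ∀ s : Fin k, (s : ℕ) + 1 ≤ v s := by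
  simp [indexSet]

theorem eq_sum_word (n k : ℕ) : Ctil n k = ∑ v ∈ indexSet n k, word v := by
  refine sum_nbij' (fun j s => (j s : ℕ)) (fun v s => ⟨min (v s) n, by omega⟩)
    ?_ ?_ ?_ ?_ fun _ _ => rfl
  · intro j hj
    simp only [mem_filter, mem_univ, true_and] at hj
    exact mem_indexSet.2 ⟨fun s => Fin.is_le (j s), fun s t hst => hj.1 s t hst, hj.2⟩
  · intro v hv
    obtain ⟨hle, hmono, hpos⟩ := mem_indexSet.1 hv
    simp only [mem_filter, mem_univ, true_and, Fin.mk_le_mk]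
    refine ⟨fun s t hst => ?_, fun s => ?_⟩
    · have := hmono hst; omega
    · have := hpos s; have := hle s; omega
  · intro j _
    funext s
    exact Fin.ext (min_eq_left (Fin.is_le (j s)))
  · intro v hv
    funext s
    exact min_eq_left ((mem_indexSet.1 hv).1 s)

theorem zero_right (n : ℕ) : Ctil n 0 = 1 := by
  simp [Ctil]

theorem eq_zero_of_lt {n k : ℕ} (h : n < k) : Ctil n k = 0 := by
  refine sum_eq_zero fun j hj => ?_
  have hpos : n + 1 ≤ (j ⟨n, h⟩ : ℕ) := (mem_filter.1 hj).2.2 ⟨n, h⟩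
  exact absurd (j ⟨n, h⟩).isLt (by omega)

theorem filter_indexSet_last_le (n k : ℕ) :
    {v ∈ indexSet (n + 1) (k + 1) | v (Fin.last k) ≤ n} = indexSet n (k + 1) := by
  ext v
  simp only [mem_filter, mem_indexSet]
  constructor
  · rintro ⟨⟨-, hmono, hpos⟩, hlast⟩
    exact ⟨fun s => (hmono (Fin.le_last s)).trans hlast, hmono, hpos⟩
  · rintro ⟨hle, hmono, hpos⟩
    exact ⟨⟨fun s => (hle s).trans n.le_succ, hmono, hpos⟩, hle _⟩

theorem init_mem_indexSet {n k : ℕ} {v : Fin (k + 1) → ℕ} (hv : v ∈ indexSet n (k + 1)) :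
    Fin.init v ∈ indexSet n k := by
  obtain ⟨hle, hmono, hpos⟩ := mem_indexSet.1 hv
  exact mem_indexSet.2
    ⟨fun s => hle _, hmono.comp Fin.strictMono_castSucc.monotone, fun s => hpos s.castSucc⟩

theorem snoc_mem_indexSet {n k : ℕ} {u : Fin k → ℕ} (hu : u ∈ indexSet n k) (hk : k < n) :
    (Fin.snoc u n : Fin (k + 1) → ℕ) ∈ indexSet n (k + 1) := by
  obtain ⟨hle, hmono, hpos⟩ := mem_indexSet.1 hu
  refine mem_indexSet.2 ⟨Fin.lastCases ?_ fun s => ?_, Fin.monotone_snoc hmono hle,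
    Fin.lastCases ?_ fun s => ?_⟩
  · simp
  · simpa using hle s
  · simpa using hk
  · simpa using hpos s

theorem word_snoc {k : ℕ} (u : Fin k → ℕ) (x : ℕ) :
    word (Fin.snoc u x : Fin (k + 1) → ℕ) = word u * ι ℤ (x - k) := by
  rw [word, word, List.ofFn_succ', List.prod_concat]
  simp only [Fin.snoc_castSucc, Fin.snoc_last, Fin.val_castSucc, Fin.val_last]

theorem succ_succ {n k : ℕ} (hk : k ≤ n) :
    Ctil (n + 1) (k + 1) = Ctil n (k + 1) + Ctil (n + 1) k * ι ℤ (n + 1 - k) := by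
  simp only [eq_sum_word, sum_mul]
  rw [← sum_filter_add_sum_filter_not _ (fun v => v (Fin.last k) ≤ n),
    filter_indexSet_last_le]
  have hlast : ∀ v ∈ {v ∈ indexSet (n + 1) (k + 1) | ¬v (Fin.last k) ≤ n},
      v (Fin.last k) = n + 1 := by
    intro v hv
    have := (mem_indexSet.1 (mem_filter.1 hv).1).1 (Fin.last k)
    have := (mem_filter.1 hv).2
    omega
  congr 1
  refine sum_nbij' Fin.init (fun u => Fin.snoc u (n + 1))
    (fun v hv => init_mem_indexSet (mem_filter.1 hv).1)
    (fun u hu => mem_filter.2 ⟨snoc_mem_indexSet hu (by omega), by simp⟩)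
    (fun v hv => ?_) (fun u _ => Fin.init_snoc _ _) (fun v hv => ?_)
  · rw [← hlast v hv, Fin.snoc_init_self]
  · rw [← word_snoc, ← hlast v hv, Fin.snoc_init_self]

noncomputable def shiftSum (n k : ℕ) : FreeAlgebra ℤ ℕ :=
  ∑ i ∈ range (k + 1), Ctil i i * T (Ctil (n - i) (k - i))

theorem shiftSum_succ_succ {m k : ℕ} (hk : k ≤ m) :
    shiftSum (m + 1) (k + 1) = shiftSum m (k + 1) + shiftSum (m + 1) k * ι ℤ (m + 1 + 1 - k) := by
  rw [shiftSum, shiftSum, shiftSum, sum_range_succ, sum_range_succ _ (k + 1), Nat.sub_self,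
    zero_right, zero_right, sum_mul, add_right_comm, ← sum_add_distrib]
  congr 1
  refine sum_congr rfl fun i hi => ?_
  have hik : i ≤ k := Nat.lt_succ_iff.1 (mem_range.1 hi)
  rw [show m + 1 - i = m - i + 1 by omega, show k + 1 - i = k - i + 1 by omega,
    succ_succ (by omega), map_add, map_mul, T_ι, mul_add, mul_assoc,
    show m - i + 1 - (k - i) + 1 = m + 1 + 1 - k by omega]

theorem shiftSum_self_succ (n : ℕ) : shiftSum n (n + 1) = Ctil (n + 1) (n + 1) := by
  rw [shiftSum, sum_range_succ, Nat.sub_self, zero_right, map_one, mul_one, add_eq_right]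
  refine sum_eq_zero fun i hi => ?_
  have hin : n - i < n + 1 - i := by have := mem_range.1 hi; omega
  rw [eq_zero_of_lt hin, map_zero, mul_zero]

theorem succ_eq_shiftSum : ∀ n k : ℕ, k ≤ n + 1 → Ctil (n + 1) k = shiftSum n k
  | n, 0, _ => by simp [shiftSum, zero_right]
  | n, k + 1, hk => by
    by_cases hkn : k = n
    · subst hkn
      exact (shiftSum_self_succ k).symm
    obtain ⟨m, rfl⟩ : ∃ m, n = m + 1 := ⟨n - 1, by omega⟩
    rw [succ_succ (by omega), succ_eq_shiftSum m (k + 1) (by omega),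
      succ_eq_shiftSum (m + 1) k (by omega), shiftSum_succ_succ (by omega)]
termination_by n k => n + k
decreasing_by all_goals omega

end Ctil

theorem Ctil_shift_recursion (n k : ℕ) (hkn : k ≤ n) :
    Ctil (n + 1) k = ∑ i ∈ Finset.range (k + 1), Ctil i i * T (Ctil (n - i) (k - i)) :=
  Ctil.succ_eq_shiftSum n k (by omega)
end

section
/- In the free ℤ-algebra ℤ⟨y_1, y_2, ...⟩, with C̃(n,k) the noncommutative truncated Catalan numbers and B(n,k) the noncommutative binomial coefficients of the first kind (B(n,k) = Σ_{j_1<...<j_k ⊆ [1,n]} y_{j_k+k−1}···y_{j_1}), one has Σ_{j=0}^{k} (−1)^j · C̃(n+k−j, j) · B(n−j, k−j) = 0 for all 0 < k ≤ n. -/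
/-- Noncommutative binomial coefficient of the first kind:
`B(n,k) = Σ_{J={j₁<⋯<j_k}⊆[1,n]} y_{j_k+k-1} ⋯ y_{j₂+1} y_{j₁}`. -/
noncomputable def ncBinom (n k : ℕ) : FreeAlgebra ℤ ℕ :=
  ∑ J ∈ Finset.powersetCard k (Finset.Icc 1 n),
    (((J.sort (· ≤ ·)).zipIdx.map (fun p => FreeAlgebra.ι ℤ (p.1 + p.2))).reverse).prod

namespace NCCatalan

open Finset

theorem monotoneOn_Iio_of_le_succ {β : Type*} [Preorder β] {g : ℕ → β} {L : ℕ}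
    (h : ∀ s, s + 1 < L → g s ≤ g (s + 1)) : MonotoneOn g (Set.Iio L) :=
  monotoneOn_of_le_succ Set.ordConnected_Iio fun a _ _ ha => by
    simpa [Order.succ_eq_add_one] using h a ha

theorem antitoneOn_Iio_of_succ_le {β : Type*} [Preorder β] {g : ℕ → β} {L : ℕ}
    (h : ∀ s, s + 1 < L → g (s + 1) ≤ g s) : AntitoneOn g (Set.Iio L) :=
  monotoneOn_Iio_of_le_succ (β := βᵒᵈ) h

theorem sum_range_succ_neg_one_pow_smul_telescope {M : Type*} [AddCommGroup M] (a g : ℕ → M)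
    (m : ℕ) (h₀ : a 0 = g 0) (hsucc : ∀ j < m, a (j + 1) = g j + g (j + 1)) :
    ∑ j ∈ range (m + 1), (-1 : ℤ) ^ j • a j = (-1 : ℤ) ^ m • g m := by
  induction m with
  | zero => simp [h₀]
  | succ m ih =>
    rw [sum_range_succ, ih fun j hj => hsucc j (by omega), hsucc m (by omega), pow_succ]
    simp only [smul_add, mul_neg_one, neg_smul]
    abel

theorem getD_take {α : Type*} {w : List α} {d : α} {j s : ℕ} (hs : s < j) :
    (w.take j).getD s d = w.getD s d := by
  simp [List.getD_eq_getElem?_getD, hs]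

theorem getD_drop {α : Type*} {w : List α} {d : α} {j t : ℕ} :
    (w.drop j).getD t d = w.getD (j + t) d := by
  simp [List.getD_eq_getElem?_getD, List.getElem?_drop]

theorem mem_image_append_product {α : Type*} [DecidableEq α] {C D : Finset (List α)} {j : ℕ}
    (hC : ∀ c ∈ C, c.length = j) {w : List α} :
    w ∈ (C ×ˢ D).image (fun p => p.1 ++ p.2) ↔ w.take j ∈ C ∧ w.drop j ∈ D := by
  constructor
  · intro hw
    obtain ⟨⟨c, d⟩, hcd, rfl⟩ := mem_image.1 hw
    obtain ⟨hc, hd⟩ := mem_product.1 hcd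
    rw [List.take_left' (hC c hc), List.drop_left' (hC c hc)]
    exact ⟨hc, hd⟩
  · rintro ⟨hc, hd⟩
    exact mem_image.2 ⟨(w.take j, w.drop j), mem_product.2 ⟨hc, hd⟩, List.take_append_drop j w⟩

noncomputable def monomial (w : List ℕ) : FreeAlgebra ℤ ℕ :=
  (w.map (FreeAlgebra.ι ℤ)).prod

theorem monomial_append (u v : List ℕ) : monomial (u ++ v) = monomial u * monomial v := by
  simp [monomial]

theorem sum_monomial_image_append_product {C D : Finset (List ℕ)} {j : ℕ}
    (hC : ∀ c ∈ C, c.length = j) :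
    ∑ w ∈ (C ×ˢ D).image (fun p => p.1 ++ p.2), monomial w
      = (∑ c ∈ C, monomial c) * ∑ d ∈ D, monomial d := by
  rw [sum_image, sum_mul_sum, sum_product]
  · simp only [monomial_append]
  · rintro ⟨c, d⟩ hcd ⟨c', d'⟩ hcd' h
    have hlen : c.length = c'.length :=
      (hC c (mem_product.1 hcd).1).trans (hC c' (mem_product.1 hcd').1).symm
    obtain ⟨rfl, rfl⟩ := List.append_inj h hlen
    rfl

structure IsCatalanWord (m : ℕ) (c : List ℕ) : Prop where
  one_le : ∀ s < c.length, 1 ≤ c.getD s 0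
  le_succ_add_one : ∀ s, s + 1 < c.length → c.getD s 0 ≤ c.getD (s + 1) 0 + 1
  last_add_length_le : c.getD (c.length - 1) 0 + c.length ≤ m + 1

def catalanIndices (m j : ℕ) : Finset (Fin j → Fin (m + 1)) :=
  univ.filter fun i => (∀ s t : Fin j, s ≤ t → i s ≤ i t) ∧ ∀ s : Fin j, (s : ℕ) + 1 ≤ i s

def catalanWord {m j : ℕ} (i : Fin j → Fin (m + 1)) : List ℕ :=
  List.ofFn fun s => (i s : ℕ) - s

def catalanWords (m j : ℕ) : Finset (List ℕ) :=
  (catalanIndices m j).image catalanWord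

theorem getD_catalanWord {m j : ℕ} (i : Fin j → Fin (m + 1)) {s : ℕ} (hs : s < j) :
    (catalanWord i).getD s 0 = i ⟨s, hs⟩ - s := by
  simp [catalanWord, List.getD_eq_getElem?_getD, hs]

theorem Ctil_eq_sum_monomial (m j : ℕ) : Ctil m j = ∑ c ∈ catalanWords m j, monomial c := by
  rw [catalanWords, sum_image]
  · simp [Ctil, catalanIndices, monomial, catalanWord, List.map_ofFn, Function.comp_def]
  · intro i hi i' hi' h
    funext s
    have hs := congrFun (List.ofFn_injective h) s
    have := (mem_filter.1 hi).2.2 s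
    have := (mem_filter.1 hi').2.2 s
    exact Fin.ext (by omega)

theorem isCatalanWord_catalanWord {m j : ℕ} {i : Fin j → Fin (m + 1)}
    (hi : i ∈ catalanIndices m j) : IsCatalanWord m (catalanWord i) := by
  simp only [catalanIndices, mem_filter, mem_univ, true_and, Fin.le_def] at hi
  obtain ⟨hmono, hlow⟩ := hi
  have hlen : (catalanWord i).length = j := List.length_ofFn
  refine ⟨fun s hs => ?_, fun s hs => ?_, ?_⟩
  · rw [hlen] at hs
    rw [getD_catalanWord i hs]
    have : s + 1 ≤ (i ⟨s, hs⟩ : ℕ) := hlow ⟨s, hs⟩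
    omega
  · rw [hlen] at hs
    rw [getD_catalanWord i (by omega), getD_catalanWord i hs]
    have : (i ⟨s, _⟩ : ℕ) ≤ i ⟨s + 1, hs⟩ := hmono ⟨s, by omega⟩ ⟨s + 1, hs⟩ (by simp)
    have : s + 2 ≤ (i ⟨s + 1, hs⟩ : ℕ) := hlow ⟨s + 1, hs⟩
    omega
  · rw [hlen]
    rcases Nat.eq_zero_or_pos j with rfl | hj
    · simp [catalanWord]
    rw [getD_catalanWord i (by omega)]
    have : j ≤ (i ⟨j - 1, by omega⟩ : ℕ) := by
      simpa [Nat.sub_add_cancel hj] using hlow ⟨j - 1, by omega⟩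
    have := (i ⟨j - 1, by omega⟩).isLt
    omega

theorem IsCatalanWord.monotoneOn_getD_add {m : ℕ} {c : List ℕ} (hc : IsCatalanWord m c) :
    MonotoneOn (fun s => c.getD s 0 + s) (Set.Iio c.length) :=
  monotoneOn_Iio_of_le_succ fun s hs => by have := hc.le_succ_add_one s hs; omega

theorem IsCatalanWord.getD_add_le {m : ℕ} {c : List ℕ} (hc : IsCatalanWord m c) {s : ℕ}
    (hs : s < c.length) : c.getD s 0 + s ≤ m := by
  have : c.getD s 0 + s ≤ c.getD (c.length - 1) 0 + (c.length - 1) :=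
    hc.monotoneOn_getD_add hs (Nat.sub_one_lt_of_lt hs) (Nat.le_sub_one_of_lt hs)
  have := hc.last_add_length_le
  omega

theorem mem_catalanWords {m j : ℕ} {c : List ℕ} :
    c ∈ catalanWords m j ↔ c.length = j ∧ IsCatalanWord m c := by
  constructor
  · intro hc
    obtain ⟨i, hi, rfl⟩ := mem_image.1 hc
    exact ⟨List.length_ofFn, isCatalanWord_catalanWord hi⟩
  · rintro ⟨rfl, hc⟩
    refine mem_image.2 ⟨fun s => ⟨c.getD s 0 + s, Nat.lt_succ_of_le (hc.getD_add_le s.isLt)⟩,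
      ?_, ?_⟩
    · simp only [catalanIndices, mem_filter, mem_univ, true_and, Fin.le_def]
      exact ⟨fun s t hst => hc.monotoneOn_getD_add s.isLt t.isLt hst,
        fun s => by have := hc.one_le s s.isLt; omega⟩
    · refine List.ext_getElem (by simp [catalanWord]) fun s h₁ h₂ => ?_
      simp [catalanWord]

theorem length_of_mem_catalanWords {m j : ℕ} : ∀ c ∈ catalanWords m j, c.length = j :=
  fun _ hc => (mem_catalanWords.1 hc).1

structure IsBinomWord (m : ℕ) (d : List ℕ) : Prop where
  one_le : ∀ t < d.length, 1 ≤ d.getD t 0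
  succ_add_two_le : ∀ t, t + 1 < d.length → d.getD (t + 1) 0 + 2 ≤ d.getD t 0
  head_lt : d ≠ [] → d.getD 0 0 < m + d.length

def binomWord (J : Finset ℕ) : List ℕ :=
  ((J.sort (· ≤ ·)).mapIdx fun i a => a + i).reverse

def binomWords (m κ : ℕ) : Finset (List ℕ) :=
  (powersetCard κ (Icc 1 m)).image binomWord

theorem length_binomWord (J : Finset ℕ) : (binomWord J).length = J.card := by
  simp [binomWord]

theorem getD_binomWord {J : Finset ℕ} {t : ℕ} (ht : t < J.card) :
    (binomWord J).getD t 0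
      = (J.sort (· ≤ ·))[J.card - 1 - t]'(by simp; omega) + (J.card - 1 - t) := by
  rw [List.getD_eq_getElem _ _ (by simpa [length_binomWord] using ht)]
  simp [binomWord]

theorem binomWord_injective : Function.Injective binomWord := by
  intro J J' h
  have h' := List.reverse_injective h
  have hsort : J.sort (· ≤ ·) = J'.sort (· ≤ ·) := by
    refine List.ext_getElem (by simpa using congrArg List.length h') fun i hi hi' => ?_
    have := List.getElem_of_eq h' (by simpa using hi)
    rw [List.getElem_mapIdx, List.getElem_mapIdx] at this
    omega
  rw [← sort_toFinset J (· ≤ ·), hsort, sort_toFinset]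

theorem ncBinom_eq_sum_monomial (m κ : ℕ) :
    ncBinom m κ = ∑ d ∈ binomWords m κ, monomial d := by
  rw [binomWords, sum_image fun J _ J' _ h => binomWord_injective h]
  simp [ncBinom, monomial, binomWord, List.map_reverse, List.mapIdx_eq_zipIdx_map,
    Function.comp_def]

theorem isBinomWord_binomWord {m κ : ℕ} {J : Finset ℕ} (hJ : J ∈ powersetCard κ (Icc 1 m)) :
    IsBinomWord m (binomWord J) := by
  obtain ⟨hsub, rfl⟩ := mem_powersetCard.1 hJ
  have hlen : (J.sort (· ≤ ·)).length = J.card := length_sort _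
  have hmem : ∀ i (hi : i < J.card), 1 ≤ (J.sort (· ≤ ·))[i] ∧ (J.sort (· ≤ ·))[i] ≤ m :=
    fun i hi => mem_Icc.1 (hsub ((mem_sort _).1 (List.getElem_mem _)))
  have hlt := (sortedLT_sort J).getElem_lt_getElem_of_lt
  refine ⟨fun t ht => ?_, fun t ht => ?_, fun hne => ?_⟩ <;> simp only [length_binomWord] at *
  · rw [getD_binomWord ht]
    have := hmem (J.card - 1 - t) (by omega)
    omega
  · rw [getD_binomWord ht, getD_binomWord (by omega)]
    have := hlt (i := J.card - 1 - (t + 1)) (j := J.card - 1 - t) (hi := by omega)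
      (hj := by omega) (by omega)
    omega
  · have hpos : 0 < J.card := by
      rw [← length_binomWord]
      exact List.length_pos_of_ne_nil hne
    rw [getD_binomWord hpos]
    have := hmem (J.card - 1 - 0) (by omega)
    omega

theorem IsBinomWord.antitoneOn_getD_add_two_mul {m : ℕ} {d : List ℕ} (hd : IsBinomWord m d) :
    AntitoneOn (fun t => d.getD t 0 + 2 * t) (Set.Iio d.length) :=
  antitoneOn_Iio_of_succ_le fun t ht => by have := hd.succ_add_two_le t ht; omega

theorem IsBinomWord.two_mul_lt_getD {m : ℕ} {d : List ℕ} (hd : IsBinomWord m d) {t : ℕ}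
    (ht : t < d.length) : 2 * (d.length - 1 - t) < d.getD t 0 := by
  have : d.getD (d.length - 1) 0 + 2 * (d.length - 1) ≤ d.getD t 0 + 2 * t :=
    hd.antitoneOn_getD_add_two_mul ht (Nat.sub_one_lt_of_lt ht) (Nat.le_sub_one_of_lt ht)
  have := hd.one_le (d.length - 1) (Nat.sub_one_lt_of_lt ht)
  omega

theorem IsBinomWord.getD_add_two_mul_lt {m : ℕ} {d : List ℕ} (hd : IsBinomWord m d) {t : ℕ}
    (ht : t < d.length) : d.getD t 0 + 2 * t < m + d.length := by
  have : d.getD t 0 + 2 * t ≤ d.getD 0 0 + 2 * 0 :=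
    hd.antitoneOn_getD_add_two_mul (Nat.zero_lt_of_lt ht) ht (Nat.zero_le t)
  have := hd.head_lt (List.ne_nil_of_length_pos (Nat.zero_lt_of_lt ht))
  omega

theorem IsBinomWord.exists_binomWord_eq {m : ℕ} {d : List ℕ} (hd : IsBinomWord m d) :
    ∃ J ∈ powersetCard d.length (Icc 1 m), binomWord J = d := by
  set l := List.ofFn fun i : Fin d.length => d.getD (d.length - 1 - i) 0 - i with hl
  have hsorted : l.SortedLT := by
    refine List.sortedLT_iff_getElem_lt_getElem_of_lt.2 fun i i' hi hi' hii' => ?_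
    simp only [hl, List.length_ofFn] at hi hi'
    simp only [hl, List.getElem_ofFn]
    have : d.getD (d.length - 1 - i) 0 + 2 * (d.length - 1 - i)
        ≤ d.getD (d.length - 1 - i') 0 + 2 * (d.length - 1 - i') :=
      hd.antitoneOn_getD_add_two_mul (show d.length - 1 - i' < d.length by omega)
        (show d.length - 1 - i < d.length by omega) (by omega)
    have := hd.two_mul_lt_getD (show d.length - 1 - i < d.length by omega)
    omega
  have hsort : (l.toFinset).sort (· ≤ ·) = l :=
    (List.toFinset_sort _ hsorted.nodup).2 (List.sortedLE_iff_pairwise.1 hsorted.sortedLE)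
  refine ⟨l.toFinset, mem_powersetCard.2 ⟨fun x hx => ?_, ?_⟩, ?_⟩
  · obtain ⟨i, rfl⟩ := List.mem_ofFn.1 (List.mem_toFinset.1 hx)
    have := hd.two_mul_lt_getD (show d.length - 1 - i < d.length by omega)
    have := hd.getD_add_two_mul_lt (show d.length - 1 - i < d.length by omega)
    simp only [mem_Icc]
    omega
  · rw [List.toFinset_card_of_nodup hsorted.nodup, List.length_ofFn]
  · rw [binomWord, hsort]
    refine List.ext_getElem (by simp [hl]) fun t h₁ h₂ => ?_
    simp only [hl, List.getElem_reverse, List.getElem_mapIdx, List.getElem_ofFn,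
      List.length_mapIdx, List.length_ofFn]
    rw [← List.getD_eq_getElem d 0 h₂, show d.length - 1 - (d.length - 1 - t) = t by omega]
    have := hd.two_mul_lt_getD h₂
    omega

theorem mem_binomWords {m κ : ℕ} {d : List ℕ} :
    d ∈ binomWords m κ ↔ d.length = κ ∧ IsBinomWord m d := by
  constructor
  · intro hd
    obtain ⟨J, hJ, rfl⟩ := mem_image.1 hd
    exact ⟨(length_binomWord J).trans (mem_powersetCard.1 hJ).2, isBinomWord_binomWord hJ⟩
  · rintro ⟨rfl, hd⟩
    exact mem_image.2 hd.exists_binomWord_eq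

theorem isCatalanWord_take_iff {m j : ℕ} {w : List ℕ} (hj : j ≤ w.length) :
    IsCatalanWord m (w.take j) ↔ (∀ s < j, 1 ≤ w.getD s 0) ∧
      (∀ s, s + 1 < j → w.getD s 0 ≤ w.getD (s + 1) 0 + 1) ∧
      (0 < j → w.getD (j - 1) 0 + j ≤ m + 1) := by
  have hlen : (w.take j).length = j := by simp [hj]
  constructor
  · rintro ⟨h₁, h₂, h₃⟩
    rw [hlen] at h₁ h₂ h₃
    refine ⟨fun s hs => ?_, fun s hs => ?_, fun hj => ?_⟩
    · rw [← getD_take hs]; exact h₁ s hs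
    · rw [← getD_take hs, ← getD_take (show s < j by omega)]; exact h₂ s hs
    · rw [← getD_take (show j - 1 < j by omega)]; exact h₃
  · rintro ⟨h₁, h₂, h₃⟩
    refine ⟨fun s hs => ?_, fun s hs => ?_, ?_⟩ <;> rw [hlen] at *
    · rw [getD_take hs]; exact h₁ s hs
    · rw [getD_take hs, getD_take (show s < j by omega)]; exact h₂ s hs
    · rcases Nat.eq_zero_or_pos j with rfl | hj
      · simp
      · rw [getD_take (show j - 1 < j by omega)]; exact h₃ hj

theorem isBinomWord_drop_iff {m j : ℕ} {w : List ℕ} :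
    IsBinomWord m (w.drop j) ↔ (∀ t, j ≤ t → t < w.length → 1 ≤ w.getD t 0) ∧
      (∀ t, j ≤ t → t + 1 < w.length → w.getD (t + 1) 0 + 2 ≤ w.getD t 0) ∧
      (j < w.length → w.getD j 0 < m + (w.length - j)) := by
  constructor
  · rintro ⟨h₁, h₂, h₃⟩
    simp only [List.length_drop, ne_eq, List.drop_eq_nil_iff, not_le] at h₁ h₂ h₃
    refine ⟨fun t ht ht' => ?_, fun t ht ht' => ?_, fun hj => ?_⟩
    · obtain ⟨u, rfl⟩ := Nat.exists_eq_add_of_le ht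
      simpa [getD_drop] using h₁ u (by omega)
    · obtain ⟨u, rfl⟩ := Nat.exists_eq_add_of_le ht
      simpa [getD_drop, add_assoc] using h₂ u (by omega)
    · simpa [getD_drop] using h₃ (by omega)
  · rintro ⟨h₁, h₂, h₃⟩
    refine ⟨fun t ht => ?_, fun t ht => ?_, fun hj => ?_⟩ <;>
      simp only [List.length_drop, ne_eq, List.drop_eq_nil_iff, not_le, getD_drop] at *
    · exact h₁ (j + t) (by omega) (by omega)
    · simpa [add_assoc] using h₂ (j + t) (by omega) (by omega)
    · simpa using h₃ (by omega)

def splitWords (n k j : ℕ) : Finset (List ℕ) :=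
  (catalanWords (n + k - j) j ×ˢ binomWords (n - j) (k - j)).image fun p => p.1 ++ p.2

theorem Ctil_mul_ncBinom_eq_sum_splitWords (n k j : ℕ) :
    Ctil (n + k - j) j * ncBinom (n - j) (k - j) = ∑ w ∈ splitWords n k j, monomial w := by
  rw [splitWords, sum_monomial_image_append_product length_of_mem_catalanWords,
    Ctil_eq_sum_monomial, ncBinom_eq_sum_monomial]

theorem length_of_mem_splitWords {n k j : ℕ} (hjk : j ≤ k) {w : List ℕ}
    (hw : w ∈ splitWords n k j) : w.length = k := by
  rw [splitWords, mem_image_append_product length_of_mem_catalanWords, mem_catalanWords,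
    mem_binomWords, List.length_take, List.length_drop] at hw
  omega

/-- The conditions of `IsCatalanWord (n + k - j)` on the first `j` letters together with those of
`IsBinomWord (n - j)` on the last `k - j`, see `mem_splitWords_iff`. -/
structure IsSplitWord (n k j : ℕ) (w : List ℕ) : Prop where
  le : j ≤ k
  one_le : ∀ s < k, 1 ≤ w.getD s 0
  le_succ_add_one : ∀ s, s + 1 < j → w.getD s 0 ≤ w.getD (s + 1) 0 + 1
  last_le : 0 < j → w.getD (j - 1) 0 + 2 * j ≤ n + k + 1
  succ_add_two_le : ∀ t, j ≤ t → t + 1 < k → w.getD (t + 1) 0 + 2 ≤ w.getD t 0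
  head_lt : j < k → w.getD j 0 + 2 * j < n + k

theorem mem_splitWords_iff {n k j : ℕ} (hkn : k ≤ n) {w : List ℕ} (hw : w.length = k) :
    w ∈ splitWords n k j ↔ IsSplitWord n k j w := by
  rw [splitWords, mem_image_append_product length_of_mem_catalanWords, mem_catalanWords,
    mem_binomWords, List.length_take, List.length_drop, hw]
  by_cases hjk : j ≤ k
  · rw [isCatalanWord_take_iff (hw ▸ hjk), isBinomWord_drop_iff, hw]
    constructor
    · rintro ⟨⟨-, hc₁, hc₂, hc₃⟩, -, hb₁, hb₂, hb₃⟩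
      refine ⟨hjk, fun s hs => ?_, hc₂, fun hj => ?_, hb₂, fun hj => ?_⟩
      · rcases lt_or_ge s j with h | h
        exacts [hc₁ s h, hb₁ s h hs]
      · have := hc₃ hj; omega
      · have := hb₃ hj; omega
    · rintro ⟨-, h₁, h₂, h₃, h₄, h₅⟩
      refine ⟨⟨by omega, fun s hs => h₁ s (by omega), h₂, fun hj => ?_⟩,
        by omega, fun t _ ht => h₁ t ht, h₄, fun hj => ?_⟩
      · have := h₃ hj; omega
      · have := h₅ hj; omega
  · exact iff_of_false (by omega) fun h => hjk h.le

namespace IsSplitWord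

variable {n k j : ℕ} {w : List ℕ}

theorem succ (h : IsSplitWord n k j w) (hjk : j < k)
    (hw : 0 < j → w.getD (j - 1) 0 ≤ w.getD j 0 + 1) : IsSplitWord n k (j + 1) w := by
  refine ⟨hjk, h.one_le, fun s hs => ?_, fun _ => ?_, fun t ht => h.succ_add_two_le t (by omega),
    fun hj => ?_⟩
  · rcases lt_or_eq_of_le (Nat.le_of_lt_succ hs) with hs | rfl
    · exact h.le_succ_add_one s hs
    · simpa [Nat.sub_add_cancel (show 0 < s + 1 by omega)] using hw (by omega)
  · have := h.head_lt hjk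
    simp only [Nat.add_sub_cancel]
    omega
  · have := h.head_lt hjk
    have := h.succ_add_two_le j le_rfl hj
    omega

theorem pred (h : IsSplitWord n k (j + 1) w)
    (hw : j + 1 < k → w.getD (j + 1) 0 + 2 ≤ w.getD j 0) : IsSplitWord n k j w := by
  refine ⟨by have := h.le; omega, h.one_le, fun s hs => h.le_succ_add_one s (by omega),
    fun hj => ?_, fun t ht ht' => ?_, fun _ => ?_⟩
  · have := h.last_le (by omega)
    have := h.le_succ_add_one (j - 1) (by omega)
    simp only [Nat.add_sub_cancel, Nat.sub_add_cancel hj] at *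
    omega
  · rcases lt_or_eq_of_le ht with ht | rfl
    · exact h.succ_add_two_le t ht ht'
    · exact hw ht'
  · have := h.last_le (by omega)
    simp only [Nat.add_sub_cancel] at this
    omega

theorem pred_iff_not_succ (h : IsSplitWord n k (j + 1) w) :
    IsSplitWord n k j w ↔ ¬ IsSplitWord n k (j + 2) w := by
  constructor
  · intro hj hj₂
    have := hj₂.le_succ_add_one j (by omega)
    have := hj.succ_add_two_le j le_rfl (by have := hj₂.le; omega)
    omega
  · intro hj₂
    refine h.pred fun hk => ?_
    by_contra hlt
    exact hj₂ (h.succ (by omega) fun _ => by simp only [Nat.add_sub_cancel]; omega)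

end IsSplitWord

theorem mem_splitWords_pred_iff {n k j : ℕ} (hkn : k ≤ n) (hjk : j + 1 ≤ k) {w : List ℕ}
    (hw : w ∈ splitWords n k (j + 1)) :
    w ∈ splitWords n k j ↔ w ∉ splitWords n k (j + 2) := by
  have hlen := length_of_mem_splitWords hjk hw
  rw [mem_splitWords_iff hkn hlen] at hw ⊢
  rw [mem_splitWords_iff hkn hlen]
  exact hw.pred_iff_not_succ

theorem sum_splitWords_succ {M : Type*} [AddCommMonoid M] (f : List ℕ → M) {n k j : ℕ}
    (hkn : k ≤ n) (hjk : j + 1 ≤ k) :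
    ∑ w ∈ splitWords n k (j + 1), f w = ∑ w ∈ splitWords n k j ∩ splitWords n k (j + 1), f w
      + ∑ w ∈ splitWords n k (j + 1) ∩ splitWords n k (j + 2), f w := by
  rw [← sum_filter_add_sum_filter_not (splitWords n k (j + 1)) (· ∈ splitWords n k (j + 2)),
    filter_mem_eq_inter, add_comm]
  refine congrArg (· + _) (sum_congr (ext fun w => ?_) fun _ _ => rfl)
  rw [mem_filter, mem_inter]
  exact ⟨fun ⟨hw, hw₂⟩ => ⟨(mem_splitWords_pred_iff hkn hjk hw).2 hw₂, hw⟩,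
    fun ⟨hw₀, hw⟩ => ⟨hw, (mem_splitWords_pred_iff hkn hjk hw).1 hw₀⟩⟩

end NCCatalan

open Finset NCCatalan

theorem alternating_Ctil_ncBinom (n k : ℕ) (hk : 0 < k) (hkn : k ≤ n) :
    ∑ j ∈ Finset.range (k + 1),
      ((-1 : ℤ) ^ j) • (Ctil (n + k - j) j * ncBinom (n - j) (k - j)) = 0 := by
  have hfirst : splitWords n k 0 ⊆ splitWords n k 1 := fun w hw => by
    have hlen := length_of_mem_splitWords (Nat.zero_le k) hw
    rw [mem_splitWords_iff hkn hlen] at hw ⊢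
    exact hw.succ hk fun h => absurd h (lt_irrefl 0)
  have hlast : splitWords n k k ∩ splitWords n k (k + 1) = ∅ := by
    refine eq_empty_of_forall_notMem fun w hw => ?_
    obtain ⟨hw, hw'⟩ := mem_inter.1 hw
    have := ((mem_splitWords_iff hkn (length_of_mem_splitWords le_rfl hw)).1 hw').le
    omega
  simp_rw [Ctil_mul_ncBinom_eq_sum_splitWords]
  rw [sum_range_succ_neg_one_pow_smul_telescope (fun j => ∑ w ∈ splitWords n k j, monomial w)
    (fun j => ∑ w ∈ splitWords n k j ∩ splitWords n k (j + 1), monomial w) k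
    (by rw [inter_eq_left.2 hfirst]) fun j hj => sum_splitWords_succ monomial hkn hj, hlast,
    sum_empty, smul_zero]
end
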